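/- arXiv:1703.07666 — 7 statements merged into one kernel-verified Lean document; each statement's English description precedes it below -/
import Mathlib

section
/- Full support of structured rectangles: There exists N such that for every n ≥ N the following holds with m = n^256. Let ρ ∈ {0,1,*}^n and let X × Y ⊆ [m]^n × ({0,1}^m)^n be a ρ-essentially-structured rectangle with nm − log₂|Y| ≤ n³ + 1. Then for every z ∈ {0,1}^n that agrees with ρ on fix(ρ), there exist x ∈ X and y ∈ Y with G(x,y) = z. -/
/-!
Suppose no `(x, y) ∈ X × Y` has `G(x, y) = z`. As `z` and all outputs `G(x, y)` agree with `ρ` on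
`fix ρ`, every table `y ∈ Y` then differs from `z`, at every pattern `x ∈ X`, on some free
coordinate. Choose patterns
of `X` greedily, each with small total overlap with the earlier ones (density makes the average
overlap small). A Janson-type estimate shows that each new pattern shrinks the set of tables that
miss `z` at all chosen patterns by the factor `1 - 2^{-(|free ρ| + 1)}`: patterns disjoint from
the new one are independent of it, and the overlapping ones cost little. After `2^{|free ρ|} n⁴`
rounds at most `e^{-n⁴/2} 2^{nm}` tables remain, so `Y` would have deficiency at least
`n⁴/2 > n³ + 1`.
-/

open Finset

namespace StructuredRectangle

variable {ι κ : Type*} [DecidableEq κ]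

section Cells

variable (F : Finset ι)

def coincidences (x x' : ι → κ) : Finset ι := {i ∈ F | x i = x' i}

/-- Counts (twice) the nonempty sets of common coordinates, which is what density controls;
unlike `2 ^ #(coincidences F x x')`, it vanishes for disjoint patterns. -/
noncomputable def overlapWeight (x x' : ι → κ) : ℝ := 2 * (2 ^ #(coincidences F x x') - 1)

lemma overlapWeight_nonneg (x x' : ι → κ) : 0 ≤ overlapWeight F x x' := by
  have : (1 : ℝ) ≤ 2 ^ #(coincidences F x x') := one_le_pow₀ one_le_two
  unfold overlapWeight
  linarith

variable {F}

lemma two_pow_le_overlapWeight {x x' : ι → κ} (h : (coincidences F x x').Nonempty) :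
    2 ^ #(coincidences F x x') ≤ overlapWeight F x x' := by
  have : (2 : ℝ) ≤ 2 ^ #(coincidences F x x') := le_self_pow₀ one_le_two h.card_pos.ne'
  unfold overlapWeight
  linarith

variable [DecidableEq ι] (F)

def cells (x : ι → κ) : Finset (ι × κ) := F.image fun i => (i, x i)

variable {F}

lemma card_cells (x : ι → κ) : #(cells F x) = #F :=
  card_image_of_injective _ fun _ _ h => congrArg Prod.fst h

lemma cells_inter_cells (x x' : ι → κ) :
    cells F x ∩ cells F x' = (coincidences F x x').image fun i => (i, x i) := by
  ext ⟨i, v⟩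
  simp only [cells, coincidences, mem_inter, mem_image, mem_filter, Prod.mk.injEq]
  constructor
  · rintro ⟨⟨j, hj, rfl, rfl⟩, ⟨_, -, rfl, h⟩⟩
    exact ⟨_, ⟨hj, h.symm⟩, rfl, rfl⟩
  · rintro ⟨j, ⟨hj, h⟩, rfl, rfl⟩
    exact ⟨⟨j, hj, rfl, rfl⟩, ⟨j, hj, rfl, h.symm⟩⟩

lemma card_cells_union_add_card_coincidences (x x' : ι → κ) :
    #(cells F x ∪ cells F x') + #(coincidences F x x') = 2 * #F := by
  have h := card_union_add_card_inter (cells F x) (cells F x')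
  rw [cells_inter_cells, card_image_of_injective _ fun _ _ h => congrArg Prod.fst h,
    card_cells, card_cells] at h
  omega

end Cells

section Tables

variable [DecidableEq ι] [Fintype ι] [Fintype κ] (F : Finset ι) (z : ι → Bool)

def hitSet (x : ι → κ) : Finset (ι → κ → Bool) :=
  {y | ∀ i ∈ F, y i (x i) = z i}

def missSet (S : Finset (ι → κ)) : Finset (ι → κ → Bool) :=
  {y | ∀ x ∈ S, ∃ i ∈ F, y i (x i) ≠ z i}

def agreeSet (D : Finset (ι × κ)) : Finset (ι → κ → Bool) :=
  {y | ∀ c ∈ D, y c.1 c.2 = z c.1}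

variable {F z}

@[simp] lemma mem_hitSet {x : ι → κ} {y : ι → κ → Bool} :
    y ∈ hitSet F z x ↔ ∀ i ∈ F, y i (x i) = z i := by
  simp [hitSet]

@[simp] lemma mem_missSet {S : Finset (ι → κ)} {y : ι → κ → Bool} :
    y ∈ missSet F z S ↔ ∀ x ∈ S, ∃ i ∈ F, y i (x i) ≠ z i := by
  simp [missSet]

@[simp] lemma mem_agreeSet {D : Finset (ι × κ)} {y : ι → κ → Bool} :
    y ∈ agreeSet z D ↔ ∀ c ∈ D, y c.1 c.2 = z c.1 := by
  simp [agreeSet]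

lemma missSet_anti {S T : Finset (ι → κ)} (h : S ⊆ T) : missSet F z T ⊆ missSet F z S :=
  fun _ hy => mem_missSet.2 fun x hx => mem_missSet.1 hy x (h hx)

@[simp] lemma missSet_empty : missSet F z (∅ : Finset (ι → κ)) = univ := by
  ext; simp

lemma card_missSet_eq_card_missSet_insert_add (x : ι → κ) (S : Finset (ι → κ)) :
    #(missSet F z S) = #(missSet F z (insert x S)) + #(hitSet F z x ∩ missSet F z S) := by
  have hmiss : missSet F z (insert x S) = {y ∈ missSet F z S | ¬ y ∈ hitSet F z x} := by
    ext y; simp [and_comm]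
  have hhit : hitSet F z x ∩ missSet F z S = {y ∈ missSet F z S | y ∈ hitSet F z x} := by
    ext y; simp [and_comm]
  rw [hmiss, hhit, add_comm, card_filter_add_card_filter_not]

lemma hitSet_inter_hitSet (x x' : ι → κ) :
    hitSet F z x ∩ hitSet F z x' = agreeSet z (cells F x ∪ cells F x') := by
  ext y
  simp [cells, or_imp, forall_and]

/-- Resetting the cells read by `x` to `z` keeps a table in `missSet F z S`, because no pattern
of `S` reads them; the reset forgets only the `2 ^ #F` values of those cells. -/
lemma card_missSet_le_card_hitSet_inter_missSet_mul {x : ι → κ} {S : Finset (ι → κ)}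
    (hS : ∀ x' ∈ S, ∀ i ∈ F, x' i ≠ x i) :
    #(missSet F z S) ≤ #(hitSet F z x ∩ missSet F z S) * 2 ^ #F := by
  let reset (y : ι → κ → Bool) : ι → κ → Bool :=
    fun i v => if i ∈ F ∧ v = x i then z i else y i v
  calc #(missSet F z S)
      ≤ #((hitSet F z x ∩ missSet F z S) ×ˢ (univ : Finset (F → Bool))) := by
        refine card_le_card_of_injOn (fun y => (reset y, fun i => y i (x i))) ?_ ?_
        · intro y hy
          simp only [coe_product, coe_inter, coe_univ, Set.mem_prod, Set.mem_inter_iff,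
            Set.mem_univ, and_true, mem_coe, mem_hitSet, mem_missSet] at hy ⊢
          refine ⟨fun i hi => by simp [reset, hi], fun x' hx' => ?_⟩
          obtain ⟨i, hi, hne⟩ := hy x' hx'
          exact ⟨i, hi, by simpa [reset, hS x' hx' i hi] using hne⟩
        · intro y₁ _ y₂ _ h
          simp only [Prod.mk.injEq] at h
          funext i v
          by_cases hc : i ∈ F ∧ v = x i
          · obtain ⟨hi, rfl⟩ := hc
            exact congrFun h.2 ⟨i, hi⟩
          · simpa [reset, hc] using congrFun (congrFun h.1 i) v
    _ = #(hitSet F z x ∩ missSet F z S) * 2 ^ #F := by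
        simp [card_product]

/-- Flipping cells of `D` away from `z` keeps a table in `missSet F z S`. -/
lemma card_agreeSet_inter_missSet_mul_le (D : Finset (ι × κ)) (S : Finset (ι → κ)) :
    #(agreeSet z D ∩ missSet F z S) * 2 ^ #D ≤ #(missSet F z S) := by
  let flip (p : (ι → κ → Bool) × Finset (ι × κ)) : ι → κ → Bool :=
    fun i v => if (i, v) ∈ p.2 then !z i else p.1 i v
  let recover (w : ι → κ → Bool) : (ι → κ → Bool) × Finset (ι × κ) :=
    (fun i v => if (i, v) ∈ D then z i else w i v, {c ∈ D | w c.1 c.2 ≠ z c.1})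
  have hrecover : ∀ p ∈ (agreeSet z D ∩ missSet F z S) ×ˢ D.powerset, recover (flip p) = p := by
    rintro ⟨y, T⟩ hp
    simp only [mem_product, mem_inter, mem_agreeSet, mem_powerset] at hp
    obtain ⟨⟨hy, -⟩, hT⟩ := hp
    refine Prod.ext (funext fun i => funext fun v => ?_) (ext fun c => ?_)
    · by_cases hD : (i, v) ∈ D
      · simp [recover, hD, hy _ hD]
      · have hT' : (i, v) ∉ T := fun h => hD (hT h)
        simp [recover, flip, hD, hT']
    · by_cases hc : c ∈ T
      · simp [recover, flip, hc, hT hc]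
      · simp +contextual [recover, flip, hc, hy c]
  calc #(agreeSet z D ∩ missSet F z S) * 2 ^ #D
      = #((agreeSet z D ∩ missSet F z S) ×ˢ D.powerset) := by rw [card_product, card_powerset]
    _ ≤ #(missSet F z S) := by
        refine card_le_card_of_injOn flip ?_ ?_
        · rintro ⟨y, T⟩ hp
          simp only [coe_product, Set.mem_prod, mem_coe, mem_inter, mem_missSet] at hp ⊢
          intro x' hx'
          obtain ⟨i, hi, hne⟩ := hp.1.2 x' hx'
          refine ⟨i, hi, ?_⟩
          by_cases h : (i, x' i) ∈ T <;> simp [flip, h, hne]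
        · intro p₁ h₁ p₂ h₂ h
          rw [← hrecover p₁ h₁, ← hrecover p₂ h₂, h]

lemma card_hitSet_inter_hitSet_inter_missSet_mul_le (x x' : ι → κ) (S : Finset (ι → κ)) :
    #(hitSet F z x ∩ hitSet F z x' ∩ missSet F z S) * 2 ^ (2 * #F) ≤
      #(missSet F z S) * 2 ^ #(coincidences F x x') := by
  rw [hitSet_inter_hitSet, ← card_cells_union_add_card_coincidences x x', pow_add, ← mul_assoc]
  exact Nat.mul_le_mul_right _ (card_agreeSet_inter_missSet_mul_le _ _)

lemma hitSet_inter_missSet_subset (x : ι → κ) (S T : Finset (ι → κ)) :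
    hitSet F z x ∩ missSet F z T ⊆
      (hitSet F z x ∩ missSet F z S) ∪
        (S \ T).biUnion fun x' => hitSet F z x ∩ hitSet F z x' ∩ missSet F z T := by
  intro y hy
  rw [mem_inter] at hy
  by_cases hyS : y ∈ missSet F z S
  · exact mem_union_left _ (mem_inter.2 ⟨hy.1, hyS⟩)
  · simp only [mem_missSet, not_forall, not_exists, not_and, not_not, exists_prop] at hyS
    obtain ⟨x', hx'S, hhit⟩ := hyS
    have hx'T : x' ∉ T := fun hx'T => by
      obtain ⟨i, hi, hne⟩ := mem_missSet.1 hy.2 x' hx'T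
      exact hne (hhit i hi)
    refine mem_union_right _ (mem_biUnion.2 ⟨x', mem_sdiff.2 ⟨hx'S, hx'T⟩, ?_⟩)
    simp only [mem_inter, mem_hitSet] at hy ⊢
    exact ⟨⟨hy.1, hhit⟩, hy.2⟩

lemma sum_card_hitSet_inter_hitSet_inter_missSet_le {x : ι → κ} {T : Finset (ι → κ)}
    (hT : ∀ x' ∈ T, (coincidences F x x').Nonempty) (S : Finset (ι → κ)) :
    ∑ x' ∈ T, (#(hitSet F z x ∩ hitSet F z x' ∩ missSet F z S) : ℝ) ≤
      #(missSet F z S) / (2 ^ #F) ^ 2 * ∑ x' ∈ T, overlapWeight F x x' := by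
  rw [mul_sum]
  refine sum_le_sum fun x' hx' => ?_
  have h : (#(hitSet F z x ∩ hitSet F z x' ∩ missSet F z S) : ℝ) * (2 ^ #F) ^ 2 ≤
      #(missSet F z S) * 2 ^ #(coincidences F x x') := by
    rw [← pow_mul, mul_comm #F]
    exact_mod_cast card_hitSet_inter_hitSet_inter_missSet_mul_le x x' S
  calc (#(hitSet F z x ∩ hitSet F z x' ∩ missSet F z S) : ℝ)
      ≤ #(missSet F z S) / (2 ^ #F) ^ 2 * 2 ^ #(coincidences F x x') := by
        rwa [div_mul_eq_mul_div, le_div_iff₀ (by positivity)]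
    _ ≤ #(missSet F z S) / (2 ^ #F) ^ 2 * overlapWeight F x x' := by
        gcongr
        exact two_pow_le_overlapWeight (hT x' hx')

lemma card_missSet_le_two_pow_mul_card_hitSet_inter_missSet {x : ι → κ} {S : Finset (ι → κ)}
    (hS : ∑ x' ∈ S, overlapWeight F x x' ≤ 2 ^ #F / 2) :
    (#(missSet F z S) : ℝ) ≤ 2 ^ (#F + 1) * #(hitSet F z x ∩ missSet F z S) := by
  set Q : ℝ := 2 ^ #F with hQ
  set SN := {x' ∈ S | ¬ (coincidences F x x').Nonempty}
  set A := hitSet F z x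
  set M := missSet F z SN
  have hQ0 : Q ≠ 0 := by positivity
  have hindep : (#M : ℝ) ≤ #(A ∩ M) * Q := by
    have hdisj : ∀ x' ∈ SN, ∀ i ∈ F, x' i ≠ x i := fun x' hx' i hi hxi =>
      (mem_filter.1 hx').2 ⟨i, mem_filter.2 ⟨hi, hxi.symm⟩⟩
    rw [hQ]
    exact_mod_cast card_missSet_le_card_hitSet_inter_missSet_mul (z := z) hdisj
  have hcorrelated : ∑ x' ∈ S \ SN, (#(A ∩ hitSet F z x' ∩ M) : ℝ) ≤ #M / (2 * Q) := by
    have hSD : ∀ x' ∈ S \ SN, (coincidences F x x').Nonempty := fun x' hx' => by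
      obtain ⟨hx'S, hx'N⟩ := mem_sdiff.1 hx'
      by_contra h
      exact hx'N (mem_filter.2 ⟨hx'S, h⟩)
    have hweight : ∑ x' ∈ S \ SN, overlapWeight F x x' ≤ Q / 2 :=
      (sum_le_sum_of_subset_of_nonneg sdiff_subset
        fun _ _ _ => overlapWeight_nonneg F x _).trans hS
    calc ∑ x' ∈ S \ SN, (#(A ∩ hitSet F z x' ∩ M) : ℝ)
        ≤ #M / Q ^ 2 * ∑ x' ∈ S \ SN, overlapWeight F x x' :=
          sum_card_hitSet_inter_hitSet_inter_missSet_le hSD SN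
      _ ≤ #M / Q ^ 2 * (Q / 2) := by gcongr
      _ = #M / (2 * Q) := by field_simp
  have hunion : (#(A ∩ M) : ℝ) ≤
      #(A ∩ missSet F z S) + ∑ x' ∈ S \ SN, (#(A ∩ hitSet F z x' ∩ M) : ℝ) := by
    exact_mod_cast (card_le_card (hitSet_inter_missSet_subset x S SN)).trans
      ((card_union_le _ _).trans (Nat.add_le_add_left card_biUnion_le _))
  have hM : (#M : ℝ) ≤ Q * #(A ∩ missSet F z S) + #M / 2 :=
    calc (#M : ℝ) ≤ #(A ∩ M) * Q := hindep
      _ ≤ (#(A ∩ missSet F z S) + #M / (2 * Q)) * Q := by gcongr; linarith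
      _ = Q * #(A ∩ missSet F z S) + #M / 2 := by field_simp
  have hSM : (#(missSet F z S) : ℝ) ≤ #M :=
    mod_cast card_le_card (missSet_anti (filter_subset _ _))
  rw [pow_succ]
  linarith

lemma card_missSet_insert_le {x : ι → κ} {S : Finset (ι → κ)}
    (hS : ∑ x' ∈ S, overlapWeight F x x' ≤ 2 ^ #F / 2) :
    (#(missSet F z (insert x S)) : ℝ) ≤ (1 - (2 ^ (#F + 1))⁻¹) * #(missSet F z S) := by
  have hsplit : (#(missSet F z S) : ℝ) =
      #(missSet F z (insert x S)) + #(hitSet F z x ∩ missSet F z S) := by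
    exact_mod_cast card_missSet_eq_card_missSet_insert_add x S
  have hhit : (#(missSet F z S) : ℝ) * (2 ^ (#F + 1))⁻¹ ≤ #(hitSet F z x ∩ missSet F z S) := by
    rw [← div_eq_mul_inv, div_le_iff₀ (by positivity), mul_comm]
    exact card_missSet_le_two_pow_mul_card_hitSet_inter_missSet hS
  linarith

end Tables

section Density

/-- With `u = m ^ (-0.9)` this is `0.9`-essential density of the projection of `X` to `F`. -/
def IsDenseOn (u : ℝ) (F : Finset ι) (X : Finset (ι → κ)) : Prop :=
  ∀ I ⊆ F, I.Nonempty → ∀ α : ι → κ, (#{x ∈ X | ∀ i ∈ I, x i = α i} : ℝ) ≤ 2 * #X * u ^ #I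

lemma one_add_pow_sub_one_le {u : ℝ} (hu : 0 ≤ u) {k : ℕ} (hku : k * u ≤ 1) :
    (1 + u) ^ k - 1 ≤ 2 * (k * u) := by
  have hexp : (1 + u) ^ k ≤ Real.exp (k * u) := by
    rw [Real.exp_nat_mul]
    exact pow_le_pow_left₀ (by linarith) (by linarith [Real.add_one_le_exp u]) k
  have hk : 0 ≤ k * u := by positivity
  have := (abs_le.1 (Real.abs_exp_sub_one_le (x := k * u) (by rwa [abs_of_nonneg hk]))).2
  rw [abs_of_nonneg hk] at this
  linarith

lemma sum_overlapWeight_le [DecidableEq ι] {u : ℝ} {F : Finset ι} {X : Finset (ι → κ)}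
    (hX : IsDenseOn u F X) (hu : 0 ≤ u) (hFu : #F * u ≤ 1) (x' : ι → κ) :
    ∑ x ∈ X, overlapWeight F x x' ≤ 8 * #F * u * #X := by
  set P := F.powerset.erase ∅
  have hweight : ∀ x, overlapWeight F x x' =
      2 * ∑ I ∈ P, if ∀ i ∈ I, x i = x' i then (1 : ℝ) else 0 := by
    intro x
    have hP : {I ∈ P | ∀ i ∈ I, x i = x' i} = (coincidences F x x').powerset.erase ∅ := by
      ext I
      simp only [P, coincidences, mem_filter, mem_erase, mem_powerset, subset_iff]
      grind
    rw [sum_boole, hP, card_erase_of_mem (empty_mem_powerset _), card_powerset,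
      Nat.cast_sub Nat.one_le_two_pow, overlapWeight]
    push_cast
    ring
  have hbinom : ∑ I ∈ P, u ^ #I = (1 + u) ^ #F - 1 := by
    rw [sum_erase_eq_sub (empty_mem_powerset _), add_comm, ← sum_pow_mul_eq_add_pow u 1 F]
    simp
  calc ∑ x ∈ X, overlapWeight F x x'
      = 2 * ∑ I ∈ P, (#{x ∈ X | ∀ i ∈ I, x i = x' i} : ℝ) := by
        simp_rw [hweight, ← mul_sum]
        rw [sum_comm]
        simp [sum_boole]
    _ ≤ 2 * ∑ I ∈ P, 2 * #X * u ^ #I := by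
        gcongr with I hI
        obtain ⟨hI, hIF⟩ := mem_erase.1 hI
        exact hX I (mem_powerset.1 hIF) (nonempty_iff_ne_empty.2 hI) x'
    _ = 4 * #X * ((1 + u) ^ #F - 1) := by
        rw [← hbinom, mul_sum, mul_sum]
        exact sum_congr rfl fun _ _ => by ring
    _ ≤ 8 * #F * u * #X := by
        nlinarith [one_add_pow_sub_one_le hu hFu, (Nat.cast_nonneg #X : (0 : ℝ) ≤ #X)]

end Density

section Iteration

variable [DecidableEq ι] {u : ℝ} {F : Finset ι} {X : Finset (ι → κ)}

lemma exists_sum_overlapWeight_le (hXne : X.Nonempty) (hX : IsDenseOn u F X) (hu : 0 ≤ u)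
    (hFu : #F * u ≤ 1) {S : Finset (ι → κ)} (hS : #S * (8 * #F * u) ≤ 2 ^ #F / 2) :
    ∃ x ∈ X, ∑ x' ∈ S, overlapWeight F x x' ≤ 2 ^ #F / 2 := by
  refine exists_le_of_sum_le hXne ?_
  calc ∑ x ∈ X, ∑ x' ∈ S, overlapWeight F x x'
      = ∑ x' ∈ S, ∑ x ∈ X, overlapWeight F x x' := sum_comm
    _ ≤ ∑ x' ∈ S, 8 * #F * u * #X := sum_le_sum fun x' _ => sum_overlapWeight_le hX hu hFu x'
    _ = #S * (8 * #F * u) * #X := by rw [sum_const, nsmul_eq_mul]; ring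
    _ ≤ 2 ^ #F / 2 * #X := by gcongr
    _ = ∑ x ∈ X, (2 : ℝ) ^ #F / 2 := by rw [sum_const, nsmul_eq_mul, mul_comm]

variable [Fintype ι] [Fintype κ] (z : ι → Bool)

lemma exists_subset_card_missSet_le (hXne : X.Nonempty) (hX : IsDenseOn u F X) (hu : 0 ≤ u)
    (hFu : #F * u ≤ 1) (s : ℕ) (hs : s * (8 * #F * u) ≤ 2 ^ #F / 2) :
    ∃ S ⊆ X, #S ≤ s ∧ (#(missSet F z S) : ℝ) ≤
      (1 - (2 ^ (#F + 1))⁻¹) ^ s * Fintype.card (ι → κ → Bool) := by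
  induction s with
  | zero => exact ⟨∅, empty_subset _, le_rfl, by simp⟩
  | succ s ih =>
    have hs' : s * (8 * #F * u) ≤ 2 ^ #F / 2 :=
      le_trans (by gcongr; simp) hs
    obtain ⟨S, hSX, hSs, hSmiss⟩ := ih hs'
    obtain ⟨x, hxX, hx⟩ := exists_sum_overlapWeight_le hXne hX hu hFu (S := S)
      (le_trans (by gcongr) hs')
    refine ⟨insert x S, insert_subset hxX hSX, (card_insert_le _ _).trans (by omega), ?_⟩
    have hq : (0 : ℝ) ≤ 1 - (2 ^ (#F + 1))⁻¹ :=
      sub_nonneg.2 (inv_le_one_of_one_le₀ (one_le_pow₀ one_le_two))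
    calc (#(missSet F z (insert x S)) : ℝ)
        ≤ (1 - (2 ^ (#F + 1))⁻¹) * #(missSet F z S) := card_missSet_insert_le hx
      _ ≤ (1 - (2 ^ (#F + 1))⁻¹) *
          ((1 - (2 ^ (#F + 1))⁻¹) ^ s * Fintype.card (ι → κ → Bool)) := by gcongr
      _ = (1 - (2 ^ (#F + 1))⁻¹) ^ (s + 1) * Fintype.card (ι → κ → Bool) := by ring

/-- `2 ^ #F * t` greedy rounds, each shrinking `missSet` by the factor `1 - 2 ^ (-(#F + 1))`. -/
theorem card_missSet_le_exp (hXne : X.Nonempty) (hX : IsDenseOn u F X) (hu : 0 ≤ u) (t : ℕ)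
    (ht : 16 * t * #F * u ≤ 1) :
    (#(missSet F z X) : ℝ) ≤ Real.exp (-(t / 2)) * Fintype.card (ι → κ → Bool) := by
  rcases Nat.eq_zero_or_pos t with rfl | htpos
  · simp only [CharP.cast_eq_zero, zero_div, neg_zero, Real.exp_zero, one_mul]
    exact_mod_cast card_le_univ _
  have hFu : #F * u ≤ 1 := by
    have : (1 : ℝ) ≤ t := by exact_mod_cast htpos
    nlinarith [mul_nonneg (Nat.cast_nonneg (α := ℝ) #F) hu]
  have hs : ((2 ^ #F * t : ℕ) : ℝ) * (8 * #F * u) ≤ 2 ^ #F / 2 := by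
    have : (0 : ℝ) < 2 ^ #F := by positivity
    push_cast
    nlinarith
  obtain ⟨S, hSX, -, hS⟩ := exists_subset_card_missSet_le z hXne hX hu hFu _ hs
  set q : ℝ := (2 ^ (#F + 1))⁻¹ with hq
  have hdecay : (1 - q) ^ (2 ^ #F * t) ≤ Real.exp (-(t / 2)) := by
    calc (1 - q) ^ (2 ^ #F * t) ≤ Real.exp (-q) ^ (2 ^ #F * t) :=
          pow_le_pow_left₀ (sub_nonneg.2 (inv_le_one_of_one_le₀ (one_le_pow₀ one_le_two)))
            (Real.one_sub_le_exp_neg q) _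
      _ = Real.exp (-(t / 2)) := by
          rw [← Real.exp_nat_mul, hq, pow_succ]
          push_cast
          field_simp
  calc (#(missSet F z X) : ℝ) ≤ #(missSet F z S) := mod_cast card_le_card (missSet_anti hSX)
    _ ≤ (1 - q) ^ (2 ^ #F * t) * Fintype.card (ι → κ → Bool) := hS
    _ ≤ Real.exp (-(t / 2)) * Fintype.card (ι → κ → Bool) := by gcongr

end Iteration

lemma sixteen_mul_pow_four_mul_rpow_le_one {n k : ℕ} (hn : 16 ≤ n) (hk : k ≤ n) :
    16 * ((n ^ 4 : ℕ) : ℝ) * k * ((n ^ 256 : ℕ) : ℝ) ^ (-(0.9 : ℝ)) ≤ 1 := by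
  have hn1 : (1 : ℝ) ≤ n := by exact_mod_cast (by omega : 1 ≤ n)
  have hn0 : (0 : ℝ) < n := by linarith
  have hpow : ((n ^ 256 : ℕ) : ℝ) ^ (-(0.9 : ℝ)) = (n : ℝ) ^ (-(230.4 : ℝ)) := by
    rw [Nat.cast_pow, ← Real.rpow_natCast, ← Real.rpow_mul hn0.le]
    norm_num
  have h16 : (16 : ℝ) ≤ n := by exact_mod_cast hn
  calc 16 * ((n ^ 4 : ℕ) : ℝ) * k * ((n ^ 256 : ℕ) : ℝ) ^ (-(0.9 : ℝ))
      ≤ 16 * (n : ℝ) ^ 4 * n * (n : ℝ) ^ (-(230.4 : ℝ)) := by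
        rw [hpow]
        push_cast
        gcongr
    _ ≤ n * (n : ℝ) ^ 4 * n * (n : ℝ) ^ (-(230.4 : ℝ)) := by gcongr
    _ = (n : ℝ) ^ (-(224.4 : ℝ)) := by
        rw [show (n : ℝ) * n ^ 4 * n = n ^ 6 by ring, ← Real.rpow_natCast, ← Real.rpow_add hn0]
        norm_num
    _ ≤ 1 := Real.rpow_le_one_of_one_le_of_nonpos hn1 (by norm_num)

lemma le_sub_logb_two_of_le_exp_mul {N : ℕ} {a t : ℝ} (ha : 0 < a) (ht : 0 ≤ t)
    (h : a ≤ Real.exp (-t) * 2 ^ N) : t ≤ N - Real.logb 2 a := by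
  have hlog : Real.log a ≤ -t + N * Real.log 2 := by
    calc Real.log a ≤ Real.log (Real.exp (-t) * 2 ^ N) := Real.log_le_log ha h
      _ = -t + N * Real.log 2 := by
        rw [Real.log_mul (Real.exp_pos _).ne' (by positivity), Real.log_exp, Real.log_pow]
  have hlog2 : 0 < Real.log 2 := Real.log_pos one_lt_two
  have hlog2' : Real.log 2 < 1 := by linarith [Real.log_two_lt_d9]
  have : Real.log a / Real.log 2 ≤ N - t := by
    rw [div_le_iff₀ hlog2]
    nlinarith
  rw [Real.logb]
  linarith

lemma pow_three_add_one_lt_pow_four_div_two {x : ℝ} (hx : 16 ≤ x) : x ^ 3 + 1 < x ^ 4 / 2 := by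
  have hx3 : 1 ≤ x ^ 3 := one_le_pow₀ (by linarith)
  nlinarith [mul_le_mul_of_nonneg_right hx (by linarith : (0 : ℝ) ≤ x ^ 3)]

end StructuredRectangle

open StructuredRectangle

/-- **Full support of structured rectangles.** For `ρ ∈ {0,1,*}^n` (encoded as
`ρ : Fin n → Option Bool`) and a `ρ`-essentially-structured rectangle `X × Y` with
`nm - log₂|Y| ≤ n³ + 1`: for every `z` agreeing with `ρ` on `fix(ρ)` there are
`x ∈ X`, `y ∈ Y` with `G(x,y) = z`. -/
theorem structured_rectangle_full_support :
    ∃ N : ℕ, ∀ n : ℕ, N ≤ n →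
    ∀ (ρ : Fin n → Option Bool)
      (X : Finset (Fin n → Fin (n ^ 256))) (Y : Finset (Fin n → Fin (n ^ 256) → Bool)),
      X.Nonempty → Y.Nonempty →
      -- all elements of X agree on the fixed positions of ρ
      (∀ x ∈ X, ∀ x' ∈ X, ∀ i : Fin n, ρ i ≠ none → x i = x' i) →
      -- the projection of X to free(ρ) is 0.9-essentially-dense
      (∀ I : Finset (Fin n), (∀ i ∈ I, ρ i = none) → I.Nonempty →
        ∀ α : Fin n → Fin (n ^ 256),
        ((X.filter fun x => ∀ i ∈ I, x i = α i).card : ℝ) ≤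
          2 * (X.card : ℝ) * ((n ^ 256 : ℕ) : ℝ) ^ (-(0.9 * (I.card : ℝ)))) →
      -- every output G(x,y) on X × Y is consistent with ρ
      (∀ x ∈ X, ∀ y ∈ Y, ∀ i : Fin n, ∀ b : Bool, ρ i = some b → y i (x i) = b) →
      -- deficiency of Y at most n³ + 1
      ((n : ℝ) * ((n ^ 256 : ℕ) : ℝ) - Real.logb 2 (Y.card : ℝ) ≤ (n : ℝ) ^ 3 + 1) →
      ∀ z : Fin n → Bool,
        (∀ i : Fin n, ∀ b : Bool, ρ i = some b → z i = b) →
        ∃ x ∈ X, ∃ y ∈ Y, ∀ i, y i (x i) = z i := by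
  refine ⟨16, fun n hn ρ X Y hXne hYne _ hdens hout hdef z hz => ?_⟩
  by_contra! hfail
  set F : Finset (Fin n) := {i | ρ i = none}
  set u : ℝ := ((n ^ 256 : ℕ) : ℝ) ^ (-(0.9 : ℝ))
  have hXdense : IsDenseOn u F X := fun I hIF hI α => by
    have h := hdens I (fun i hi => by simpa [F] using hIF hi) hI α
    rw [← neg_mul, Real.rpow_mul (Nat.cast_nonneg _), Real.rpow_natCast] at h
    -- `h` filters with a different (but equal) `Decidable` instance
    convert h
  have hYmiss : Y ⊆ missSet F z X := fun y hy => mem_missSet.2 fun x hx => by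
    obtain ⟨i, hi⟩ := hfail x hx y hy
    refine ⟨i, ?_, hi⟩
    cases hρ : ρ i with
    | none => simpa [F] using hρ
    | some b => exact absurd ((hout x hx y hy i b hρ).trans (hz i b hρ).symm) hi
  have hFn : #F ≤ n := (card_le_univ F).trans_eq (Fintype.card_fin n)
  have hY : (#Y : ℝ) ≤ Real.exp (-((n ^ 4 : ℕ) / 2)) * 2 ^ (n * n ^ 256) := by
    have hcard : Fintype.card (Fin n → Fin (n ^ 256) → Bool) = 2 ^ (n * n ^ 256) := by
      simp [← pow_mul, mul_comm]
    calc (#Y : ℝ) ≤ #(missSet F z X) := mod_cast card_le_card hYmiss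
      _ ≤ _ := by
        simpa [hcard] using card_missSet_le_exp z hXne hXdense (by positivity) (n ^ 4)
          (sixteen_mul_pow_four_mul_rpow_le_one hn hFn)
  have hdeficiency := le_sub_logb_two_of_le_exp_mul (by exact_mod_cast hYne.card_pos)
    (by positivity) hY
  push_cast at hdeficiency hdef
  linarith [pow_three_add_one_lt_pow_four_div_two (by exact_mod_cast hn : (16 : ℝ) ≤ n)]
end

section
/- Density-restoring partition: Let m ≥ 2, let J be a finite index set, and let X ⊆ [m]^J be nonempty. Then there exist an ordered partition X = X¹ ∪ X² ∪ ⋯ ∪ X^k into nonempty parts, together with sets I_i ⊆ J and assignments α_i ∈ [m]^{I_i} for each i, such that: (1) every x ∈ X^i satisfies x_{I_i} = α_i; (2) the projection of X^i to the coordinates J ∖ I_i is 0.9-dense; and (3) |J ∖ I_i| · log₂ m − log₂|X^i| ≤ (|J| · log₂ m − log₂|X|) − 0.1|I_i| · log₂ m + δ_i, where δ_i = log₂(|X| / |X^i ∪ X^{i+1} ∪ ⋯ ∪ X^k|). -/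
open Finset


private lemma key_step (m : ℕ) (hm : 2 ≤ m) (J : Type) [Fintype J] [DecidableEq J]
    (X : Finset (J → Fin m)) (hX : X.Nonempty) :
    ∃ (I : Finset J) (α : J → Fin m),
      ((X.card : ℝ) * (m : ℝ) ^ (-(0.9 * (I.card : ℝ))) ≤
        ((X.filter fun x => ∀ j ∈ I, x j = α j).card : ℝ)) ∧
      (∀ K : Finset J, Disjoint K I → K.Nonempty → ∀ β : J → Fin m,
        ((((X.filter fun x => ∀ j ∈ I, x j = α j)).filter fun x => ∀ j ∈ K, x j = β j).card : ℝ) ≤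
          (((X.filter fun x => ∀ j ∈ I, x j = α j)).card : ℝ) *
            (m : ℝ) ^ (-(0.9 * (K.card : ℝ)))) := by
  classical
  have hm0 : (0:ℝ) < (m:ℝ) := by positivity
  set Q : Finset J × (J → Fin m) → Prop := fun p =>
    (X.card : ℝ) * (m : ℝ) ^ (-(0.9 * (p.1.card : ℝ))) ≤
      ((X.filter fun x => ∀ j ∈ p.1, x j = p.2 j).card : ℝ) with hQ
  set s : Finset (Finset J × (J → Fin m)) := Finset.univ.filter Q with hs
  have hsne : s.Nonempty := by
    refine ⟨(∅, fun _ => ⟨0, by omega⟩), ?_⟩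
    simp only [hs, Finset.mem_filter, Finset.mem_univ, true_and, hQ]
    have : (X.filter fun x => ∀ j ∈ (∅ : Finset J), x j = (fun _ => (⟨0, by omega⟩ : Fin m)) j) = X := by
      apply Finset.filter_true_of_mem; intro x _; simp
    rw [this]
    simp
  obtain ⟨⟨I, α⟩, hmem, hmax⟩ := Finset.exists_max_image s (fun p => p.1.card) hsne
  have hQI : Q (I, α) := (Finset.mem_filter.mp hmem).2
  refine ⟨I, α, hQI, ?_⟩
  intro K hdisj hKne β
  by_contra hcon
  push_neg at hcon
  set P := X.filter fun x => ∀ j ∈ I, x j = α j with hP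
  set α' : J → Fin m := fun j => if j ∈ K then β j else α j with hα'
  have hfilt : (X.filter fun x => ∀ j ∈ I ∪ K, x j = α' j) =
      P.filter fun x => ∀ j ∈ K, x j = β j := by
    rw [hP, Finset.filter_filter]
    apply Finset.filter_congr
    intro x _
    simp only [Finset.mem_union, hα']
    constructor
    · intro h
      constructor
      · intro j hj
        have hjK : j ∉ K := fun hk => (Finset.disjoint_left.mp hdisj hk) hj
        have := h j (Or.inl hj); simpa [hjK] using this
      · intro j hj
        have := h j (Or.inr hj); simpa [hj] using this
    · rintro ⟨h1, h2⟩ j hj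
      rcases hj with hj | hj
      · have hjK : j ∉ K := fun hk => (Finset.disjoint_left.mp hdisj hk) hj
        simpa [hjK] using h1 j hj
      · simpa [hj] using h2 j hj
  have hQ' : Q (I ∪ K, α') := by
    rw [hQ]
    simp only []
    rw [hfilt]
    have hcard : ((I ∪ K).card : ℝ) = (I.card : ℝ) + (K.card : ℝ) := by
      rw [Finset.card_union_of_disjoint hdisj.symm]; push_cast; ring
    have h1 : (X.card : ℝ) * (m : ℝ) ^ (-(0.9 * ((I ∪ K).card : ℝ))) =
        ((X.card : ℝ) * (m : ℝ) ^ (-(0.9 * (I.card : ℝ)))) * (m : ℝ) ^ (-(0.9 * (K.card : ℝ))) := by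
      rw [hcard, mul_assoc, ← Real.rpow_add hm0]; ring_nf
    rw [h1]
    have h2 : ((X.card : ℝ) * (m : ℝ) ^ (-(0.9 * (I.card : ℝ)))) * (m : ℝ) ^ (-(0.9 * (K.card : ℝ))) ≤
        (P.card : ℝ) * (m : ℝ) ^ (-(0.9 * (K.card : ℝ))) := by
      apply mul_le_mul_of_nonneg_right hQI (le_of_lt (Real.rpow_pos_of_pos hm0 _))
    exact h2.trans hcon.le
  have hmem' : (I ∪ K, α') ∈ s := by
    rw [hs]; exact Finset.mem_filter.mpr ⟨Finset.mem_univ _, hQ'⟩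
  have := hmax _ hmem'
  simp only at this
  have : (I ∪ K).card ≤ I.card := this
  have hlt : I.card < (I ∪ K).card := by
    rw [Finset.card_union_of_disjoint hdisj.symm]
    have := Finset.card_pos.mpr hKne
    omega
  omega

private lemma shift_biUnion {k : ℕ} {γ : Type*} [DecidableEq γ] (X' : Finset γ)
    (parts : Fin k → Finset γ) (i : Fin k) :
    ((Finset.univ.filter fun j : Fin (k+1) => i.succ ≤ j).biUnion (Fin.cons X' parts)) =
    ((Finset.univ.filter fun j : Fin k => i ≤ j).biUnion parts) := by
  ext x
  simp only [Finset.mem_biUnion, Finset.mem_filter, Finset.mem_univ, true_and]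
  constructor
  · rintro ⟨j, hij, hx⟩
    induction j using Fin.cases with
    | zero =>
        exfalso
        have : (i.succ : Fin (k+1)) ≤ 0 := hij
        simp [Fin.le_def] at this
    | succ j' =>
        exact ⟨j', Fin.succ_le_succ_iff.mp hij, by simpa using hx⟩
  · rintro ⟨j, hij, hx⟩
    exact ⟨j.succ, Fin.succ_le_succ_iff.mpr hij, by simpa using hx⟩

private lemma cons_biUnion_univ {k : ℕ} {γ : Type*} [DecidableEq γ] (X' : Finset γ)
    (parts : Fin k → Finset γ) :
    (Finset.univ.biUnion (Fin.cons X' parts)) = X' ∪ Finset.univ.biUnion parts := by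
  ext x
  simp only [Finset.mem_biUnion, Finset.mem_univ, true_and, Finset.mem_union]
  constructor
  · rintro ⟨j, hx⟩
    induction j using Fin.cases with
    | zero => exact Or.inl (by simpa using hx)
    | succ j' => exact Or.inr ⟨j', by simpa using hx⟩
  · rintro (hx | ⟨j, hx⟩)
    · exact ⟨0, by simpa using hx⟩
    · exact ⟨j.succ, by simpa using hx⟩

private lemma aux_partition (m : ℕ) (hm : 2 ≤ m) (J : Type) [Fintype J] [DecidableEq J] :
    ∀ (n : ℕ) (X : Finset (J → Fin m)), X.card ≤ n →
    ∃ (k : ℕ) (parts : Fin k → Finset (J → Fin m))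
      (I : Fin k → Finset J) (α : Fin k → (J → Fin m)),
      (∀ i, (parts i).Nonempty) ∧
      (∀ i j, i ≠ j → Disjoint (parts i) (parts j)) ∧
      (X = Finset.univ.biUnion parts) ∧
      (∀ i, ∀ x ∈ parts i, ∀ j ∈ I i, x j = α i j) ∧
      (∀ i, ∀ K : Finset J, Disjoint K (I i) → K.Nonempty → ∀ β : J → Fin m,
        (((parts i).filter fun x => ∀ j ∈ K, x j = β j).card : ℝ) ≤
          ((parts i).card : ℝ) * (m : ℝ) ^ (-(0.9 * (K.card : ℝ)))) ∧
      (∀ i : Fin k,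
        ((((Finset.univ.filter fun j => i ≤ j)).biUnion parts).card : ℝ) *
          (m : ℝ) ^ (-(0.9 * ((I i).card : ℝ))) ≤ ((parts i).card : ℝ)) := by
  intro n
  induction n with
  | zero =>
      intro X hX
      have : X = ∅ := Finset.card_eq_zero.mp (Nat.le_zero.mp hX)
      subst this
      exact ⟨0, Fin.elim0, Fin.elim0, Fin.elim0, fun i => i.elim0, fun i => i.elim0,
        by simp, fun i => i.elim0, fun i => i.elim0, fun i => i.elim0⟩
  | succ n ih =>
      intro X hX
      rcases eq_or_ne X ∅ with rfl | hne
      · exact ⟨0, Fin.elim0, Fin.elim0, Fin.elim0, fun i => i.elim0, fun i => i.elim0,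
          by simp, fun i => i.elim0, fun i => i.elim0, fun i => i.elim0⟩
      · have hXne : X.Nonempty := Finset.nonempty_iff_ne_empty.mpr hne
        obtain ⟨I0, α0, hbound, hdense⟩ := key_step m hm J X hXne
        set X' := X.filter fun x => ∀ j ∈ I0, x j = α0 j with hX'
        have hm0 : (0:ℝ) < (m:ℝ) := by positivity
        have hX'pos : 0 < X'.card := by
          by_contra h
          push_neg at h
          have h0 : (X'.card : ℝ) = 0 := by
            have : X'.card = 0 := Nat.le_zero.mp h; simp [this]
          have hXpos : (0:ℝ) < (X.card : ℝ) := by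
            have := Finset.card_pos.mpr hXne; positivity
          have : (0:ℝ) < (X.card : ℝ) * (m : ℝ) ^ (-(0.9 * ((I0.card : ℝ)))) := by
            positivity
          linarith [hbound, h0.le]
        have hX'sub : X' ⊆ X := Finset.filter_subset _ _
        have hcard2 : (X \ X').card ≤ n := by
          rw [Finset.card_sdiff_of_subset hX'sub]
          omega
        obtain ⟨k, parts, I, α, h1, h2, h3, h4, h5, h6⟩ := ih (X \ X') hcard2
        refine ⟨k + 1, Fin.cons X' parts, Fin.cons I0 I, Fin.cons α0 α, ?_, ?_, ?_, ?_, ?_, ?_⟩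
        · intro i
          induction i using Fin.cases with
          | zero => simpa using Finset.card_pos.mp hX'pos
          | succ i' => simpa using h1 i'
        · intro i j hij
          have hpartsub : ∀ l, parts l ⊆ X \ X' := by
            intro l
            rw [h3]
            exact Finset.subset_biUnion_of_mem parts (Finset.mem_univ l)
          induction i using Fin.cases with
          | zero =>
              induction j using Fin.cases with
              | zero => exact absurd rfl hij
              | succ j' =>
                  simp only [Fin.cons_zero, Fin.cons_succ]
                  exact (Finset.sdiff_disjoint.mono_left (hpartsub j')).symm
          | succ i' =>
              induction j using Fin.cases with
              | zero =>
                  simp only [Fin.cons_zero, Fin.cons_succ]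
                  exact Finset.sdiff_disjoint.mono_left (hpartsub i')
              | succ j' =>
                  simp only [Fin.cons_succ]
                  exact h2 i' j' (fun h => hij (by rw [h]))
        · rw [cons_biUnion_univ, ← h3, Finset.union_sdiff_of_subset hX'sub]
        · intro i
          induction i using Fin.cases with
          | zero =>
              intro x hx j hj
              simp only [Fin.cons_zero] at hx hj ⊢
              exact (Finset.mem_filter.mp hx).2 j hj
          | succ i' =>
              intro x hx j hj
              simp only [Fin.cons_succ] at hx hj ⊢
              exact h4 i' x hx j hj
        · intro i
          induction i using Fin.cases with
          | zero => simpa using hdense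
          | succ i' => simpa using h5 i'
        · intro i
          induction i using Fin.cases with
          | zero =>
              have hfull : (Finset.univ.filter fun j : Fin (k+1) => (0 : Fin (k+1)) ≤ j) =
                  Finset.univ := by
                apply Finset.filter_true_of_mem
                intro j _
                exact Fin.zero_le j
              rw [hfull, cons_biUnion_univ, ← h3, Finset.union_sdiff_of_subset hX'sub]
              simpa using hbound
          | succ i' =>
              rw [shift_biUnion]
              simpa using h6 i'

/-- **Density-restoring partition.** For `m ≥ 2`, a finite index set `J` and a nonempty
`X ⊆ [m]^J`, there is an ordered partition `X = X¹ ∪ ⋯ ∪ X^k` into nonempty parts,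
with sets `I_i ⊆ J` and assignments `α_i ∈ [m]^{I_i}`, such that (1) every `x ∈ Xⁱ` has
`x_{I_i} = α_i`; (2) the projection of `Xⁱ` to `J ∖ I_i` is 0.9-dense; and
(3) the deficiency bound
`|J ∖ I_i|·log₂ m − log₂|Xⁱ| ≤ (|J|·log₂ m − log₂|X|) − 0.1|I_i|·log₂ m + δ_i` holds,
where `δ_i = log₂(|X| / |Xⁱ ∪ ⋯ ∪ X^k|)`. -/
theorem density_restoring_partition (m : ℕ) (hm : 2 ≤ m)
    (J : Type) [Fintype J] [DecidableEq J]
    (X : Finset (J → Fin m)) (hX : X.Nonempty) :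
    ∃ (k : ℕ) (parts : Fin k → Finset (J → Fin m))
      (I : Fin k → Finset J) (α : Fin k → (J → Fin m)),
      -- X = X¹ ∪ ⋯ ∪ X^k is an (ordered) partition into nonempty parts
      (∀ i, (parts i).Nonempty) ∧
      (∀ i j, i ≠ j → Disjoint (parts i) (parts j)) ∧
      (X = Finset.univ.biUnion parts) ∧
      -- (1) every x ∈ Xⁱ satisfies x_{I_i} = α_i
      (∀ i, ∀ x ∈ parts i, ∀ j ∈ I i, x j = α i j) ∧
      -- (2) the projection of Xⁱ to J ∖ I_i is 0.9-dense
      (∀ i, ∀ K : Finset J, Disjoint K (I i) → K.Nonempty → ∀ β : J → Fin m,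
        (((parts i).filter fun x => ∀ j ∈ K, x j = β j).card : ℝ) ≤
          ((parts i).card : ℝ) * (m : ℝ) ^ (-(0.9 * (K.card : ℝ)))) ∧
      -- (3) deficiency bound
      (∀ i : Fin k,
        (((I i)ᶜ.card : ℝ) * Real.logb 2 (m : ℝ) - Real.logb 2 ((parts i).card : ℝ)) ≤
          ((Fintype.card J : ℝ) * Real.logb 2 (m : ℝ) - Real.logb 2 (X.card : ℝ)) -
            0.1 * ((I i).card : ℝ) * Real.logb 2 (m : ℝ) +
            Real.logb 2 ((X.card : ℝ) /
              ((((Finset.univ.filter fun j => i ≤ j)).biUnion parts).card : ℝ))) := by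
  obtain ⟨k, parts, I, α, h1, h2, h3, h4, h5, h6⟩ :=
    aux_partition m hm J X.card X le_rfl
  refine ⟨k, parts, I, α, h1, h2, h3, h4, h5, ?_⟩
  intro i
  set Y := (Finset.univ.filter fun j => i ≤ j).biUnion parts with hY
  have hm0 : (0:ℝ) < (m:ℝ) := by positivity
  have hm1 : (1:ℝ) < (m:ℝ) := by
    have : (2:ℝ) ≤ (m:ℝ) := by exact_mod_cast hm
    linarith
  have hPpos : (0:ℝ) < ((parts i).card : ℝ) := by
    have := Finset.card_pos.mpr (h1 i); positivity
  have hPsubY : parts i ⊆ Y := by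
    rw [hY]
    exact Finset.subset_biUnion_of_mem parts (Finset.mem_filter.mpr ⟨Finset.mem_univ i, le_refl i⟩)
  have hYpos : (0:ℝ) < (Y.card : ℝ) := by
    have h := Finset.card_le_card hPsubY
    have := Finset.card_pos.mpr (h1 i)
    have : 0 < Y.card := by omega
    positivity
  have hXpos : (0:ℝ) < (X.card : ℝ) := by
    have := Finset.card_pos.mpr hX; positivity
  have hL : (0:ℝ) < Real.logb 2 (m:ℝ) := Real.logb_pos one_lt_two hm1
  have hIcompl : (((I i)ᶜ.card : ℝ)) = (Fintype.card J : ℝ) - ((I i).card : ℝ) := by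
    rw [Finset.card_compl]
    have := Finset.card_le_univ (I i)
    push_cast [Nat.cast_sub this]
    simp
  have hlogdiv : Real.logb 2 ((X.card : ℝ) / (Y.card : ℝ)) =
      Real.logb 2 (X.card : ℝ) - Real.logb 2 (Y.card : ℝ) :=
    Real.logb_div (ne_of_gt hXpos) (ne_of_gt hYpos)
  -- key inequality: logb 2 Y ≤ logb 2 P + 0.9 * |I| * logb 2 m
  have hkey := h6 i
  rw [← hY] at hkey
  have hstep : (Y.card : ℝ) ≤ ((parts i).card : ℝ) * (m:ℝ) ^ ((0.9 * ((I i).card : ℝ))) := by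
    have hpow : (0:ℝ) < (m:ℝ) ^ ((0.9 * ((I i).card : ℝ))) := Real.rpow_pos_of_pos hm0 _
    rw [Real.rpow_neg hm0.le] at hkey
    calc (Y.card : ℝ) = (Y.card : ℝ) * ((m:ℝ) ^ ((0.9 * ((I i).card : ℝ))))⁻¹ *
            (m:ℝ) ^ ((0.9 * ((I i).card : ℝ))) := by
          field_simp
      _ ≤ ((parts i).card : ℝ) * (m:ℝ) ^ ((0.9 * ((I i).card : ℝ))) := by
          apply mul_le_mul_of_nonneg_right hkey hpow.le
  have hlogY : Real.logb 2 (Y.card : ℝ) ≤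
      Real.logb 2 ((parts i).card : ℝ) + 0.9 * ((I i).card : ℝ) * Real.logb 2 (m:ℝ) := by
    have hpow : (0:ℝ) < (m:ℝ) ^ ((0.9 * ((I i).card : ℝ))) := Real.rpow_pos_of_pos hm0 _
    have h1' : Real.logb 2 (Y.card : ℝ) ≤
        Real.logb 2 (((parts i).card : ℝ) * (m:ℝ) ^ ((0.9 * ((I i).card : ℝ)))) :=
      (Real.logb_le_logb one_lt_two hYpos (by positivity)).mpr hstep
    have h2' : Real.logb 2 (((parts i).card : ℝ) * (m:ℝ) ^ ((0.9 * ((I i).card : ℝ)))) =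
        Real.logb 2 ((parts i).card : ℝ) + 0.9 * ((I i).card : ℝ) * Real.logb 2 (m:ℝ) := by
      rw [Real.logb_mul (ne_of_gt hPpos) (ne_of_gt hpow)]
      congr 1
      rw [Real.logb, Real.logb, Real.log_rpow hm0]
      ring
    linarith
  rw [hIcompl, hlogdiv]
  nlinarith [hlogY]
end

section
/- Pointwise uniformity from small Fourier coefficients: Let n ≥ 2 and let J be a nonempty finite index set with |J| ≤ n. Let D be a probability distribution on {0,1}^J such that for every nonempty I ⊆ J, |Σ_{z ∈ {0,1}^J} D(z) · (−1)^(Σ_{i∈I} z_i)| ≤ n^(−5|I|). Then for every z ∈ {0,1}^J, |D(z) − 2^(−|J|)| ≤ (1/n³) · 2^(−|J|); that is, D is 1/n³-pointwise-close to the uniform distribution on {0,1}^J. -/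
open Finset

/-!
Fourier inversion on `{0,1}^J` gives `2^|J| D(z) - 1 = ∑_{I ≠ ∅} b(I) χ_I(z)` with
`b(I) = ∑_w D(w) χ_I(w)`. Bounding each term by `n^(-5|I|)` and summing with the binomial theorem
gives `(1 + n^(-5))^|J| - 1 ≤ 2|J| n^(-5) ≤ n^(-3)`.
-/

namespace BoolCube

variable {J : Type*}

def character (I : Finset J) (z : J → Bool) : ℝ :=
  (-1) ^ (∑ i ∈ I, if z i then 1 else 0)

@[simp]
theorem character_empty (z : J → Bool) : character ∅ z = 1 := by
  simp [character]

@[simp]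
theorem abs_character (I : Finset J) (z : J → Bool) : |character I z| = 1 := by
  simp [character, abs_pow]

theorem character_mul_character (I : Finset J) (w z : J → Bool) :
    character I w * character I z =
      ∏ i ∈ I, (-1 : ℝ) ^ ((if w i then 1 else 0) + if z i then 1 else 0) := by
  simp only [character, pow_add, prod_mul_distrib, prod_pow_eq_pow_sum]

variable [Fintype J]

theorem sum_character_mul_character (w z : J → Bool) :
    ∑ I ∈ univ.powerset, character I w * character I z =
      if w = z then 2 ^ Fintype.card J else 0 := by
  simp only [character_mul_character, ← prod_one_add]
  split_ifs with hwz
  · subst hwz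
    have hone : ∀ i, (1 : ℝ) + (-1) ^ ((if w i then 1 else 0) + if w i then 1 else 0) = 2 := by
      intro i; cases w i <;> norm_num
    simp only [hone, prod_const, card_univ]
  · obtain ⟨i, hi⟩ : ∃ i, w i ≠ z i := Function.ne_iff.mp hwz
    refine prod_eq_zero (mem_univ i) ?_
    cases hw : w i <;> cases hz : z i <;> simp_all

variable [DecidableEq J]

/-- `2^|J|` times the Fourier coefficient of `D` at `I`. -/
def bias (D : (J → Bool) → ℝ) (I : Finset J) : ℝ :=
  ∑ z, D z * character I z

theorem bias_empty (D : (J → Bool) → ℝ) : bias D ∅ = ∑ z, D z := by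
  simp [bias]

theorem sum_bias_mul_character (D : (J → Bool) → ℝ) (z : J → Bool) :
    ∑ I ∈ univ.powerset, bias D I * character I z = 2 ^ Fintype.card J * D z := by
  simp only [bias, sum_mul, mul_assoc]
  rw [sum_comm]
  simp only [← mul_sum, sum_character_mul_character, mul_ite, mul_zero, sum_ite_eq, mem_univ,
    if_true, mul_comm]

theorem abs_two_pow_card_mul_sub_sum_le (D : (J → Bool) → ℝ) {x : ℝ}
    (hbias : ∀ I : Finset J, I.Nonempty → |bias D I| ≤ x ^ I.card) (z : J → Bool) :
    |2 ^ Fintype.card J * D z - ∑ w, D w| ≤ (1 + x) ^ Fintype.card J - 1 := by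
  have hempty : (∅ : Finset J) ∈ univ.powerset := empty_mem_powerset _
  calc |2 ^ Fintype.card J * D z - ∑ w, D w|
      = |∑ I ∈ univ.powerset.erase ∅, bias D I * character I z| := by
        rw [← sum_bias_mul_character, sum_erase_eq_sub hempty, character_empty, mul_one,
          bias_empty]
    _ ≤ ∑ I ∈ univ.powerset.erase ∅, x ^ I.card := by
        refine (abs_sum_le_sum_abs _ _).trans (sum_le_sum fun I hI => ?_)
        rw [abs_mul, abs_character, mul_one]
        exact hbias I (nonempty_iff_ne_empty.mpr (ne_of_mem_erase hI))
    _ = (1 + x) ^ Fintype.card J - 1 := by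
        have hbinom := prod_one_add (f := fun _ : J => x) univ
        simp only [prod_const, card_univ] at hbinom
        rw [sum_erase_eq_sub hempty, card_empty, pow_zero, hbinom]

end BoolCube

theorem one_add_pow_sub_one_le {x : ℝ} (hx : 0 ≤ x) {m : ℕ} (hmx : m * x ≤ 1) :
    (1 + x) ^ m - 1 ≤ 2 * (m * x) := by
  have hexp : (1 + x) ^ m ≤ Real.exp (m * x) := by
    rw [Real.exp_nat_mul]
    exact pow_le_pow_left₀ (by linarith) (by linarith [Real.add_one_le_exp x]) m
  have hclose := Real.abs_exp_sub_one_le (x := m * x) (by rwa [abs_of_nonneg (by positivity)])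
  linarith [le_abs_self (Real.exp (m * x) - 1), abs_of_nonneg (by positivity : (0:ℝ) ≤ m * x)]

theorem one_add_inv_pow_five_pow_sub_one_le {n m : ℕ} (hn : 2 ≤ n) (hm : m ≤ n) :
    (1 + ((n : ℝ) ^ 5)⁻¹) ^ m - 1 ≤ 1 / (n : ℝ) ^ 3 := by
  have hn' : (2 : ℝ) ≤ n := by exact_mod_cast hn
  have hm' : (m : ℝ) ≤ n := by exact_mod_cast hm
  have hmx : m * ((n : ℝ) ^ 5)⁻¹ ≤ 1 / (n : ℝ) ^ 4 := by
    rw [← div_eq_mul_inv, div_le_div_iff₀ (by positivity) (by positivity)]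
    nlinarith [pow_pos (by positivity : (0:ℝ) < n) 4]
  refine (one_add_pow_sub_one_le (by positivity) (hmx.trans ?_)).trans ?_
  · rw [div_le_one (by positivity)]
    nlinarith [pow_le_pow_left₀ (by norm_num) hn' 4]
  · calc 2 * (m * ((n : ℝ) ^ 5)⁻¹) ≤ 2 * (1 / (n : ℝ) ^ 4) := by gcongr
      _ ≤ 1 / (n : ℝ) ^ 3 := by
        rw [mul_one_div, div_le_div_iff₀ (by positivity) (by positivity), pow_succ]
        nlinarith [pow_pos (by positivity : (0:ℝ) < n) 3]

theorem abs_sub_inv_le_of_abs_mul_sub_one_le {a c ε : ℝ} (hc : 0 < c) (h : |c * a - 1| ≤ ε) :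
    |a - c⁻¹| ≤ ε * c⁻¹ := by
  have hfactor : a - c⁻¹ = (c * a - 1) * c⁻¹ := by field_simp
  rw [hfactor, abs_mul, abs_of_pos (inv_pos.mpr hc)]
  exact mul_le_mul_of_nonneg_right h (inv_pos.mpr hc).le

theorem pointwise_uniformity_from_parities_general (n : ℕ) (hn : 2 ≤ n)
    (J : Type) [Fintype J] [DecidableEq J]
    (hJ : Fintype.card J ≤ n)
    (D : (J → Bool) → ℝ)
    (hD1 : ∑ z, D z = 1)
    (hFourier : ∀ I : Finset J, I.Nonempty →
      |∑ z, D z * (-1 : ℝ) ^ (∑ i ∈ I, if z i then 1 else 0)| ≤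
        (n : ℝ) ^ (-(5 * (I.card : ℝ)))) :
    ∀ z : J → Bool,
      |D z - (2 : ℝ) ^ (-(Fintype.card J : ℝ))| ≤
        (1 / (n : ℝ) ^ 3) * (2 : ℝ) ^ (-(Fintype.card J : ℝ)) := by
  intro z
  have hbias : ∀ I : Finset J, I.Nonempty → |BoolCube.bias D I| ≤ ((n : ℝ) ^ 5)⁻¹ ^ I.card := by
    intro I hI
    have hpow : (n : ℝ) ^ (-(5 * (I.card : ℝ))) = ((n : ℝ) ^ 5)⁻¹ ^ I.card := by
      rw [Real.rpow_neg (Nat.cast_nonneg n), ← Nat.cast_ofNat, ← Nat.cast_mul, Real.rpow_natCast,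
        pow_mul, inv_pow]
    exact (hFourier I hI).trans_eq hpow
  have hclose : |2 ^ Fintype.card J * D z - 1| ≤ 1 / (n : ℝ) ^ 3 := by
    have h := (BoolCube.abs_two_pow_card_mul_sub_sum_le D hbias z).trans
      (one_add_inv_pow_five_pow_sub_one_le hn hJ)
    rwa [hD1] at h
  rw [Real.rpow_neg zero_le_two, Real.rpow_natCast]
  exact abs_sub_inv_le_of_abs_mul_sub_one_le (by positivity) hclose

/-- **Pointwise uniformity from small Fourier coefficients.** Let `n ≥ 2` and `J` a
nonempty finite index set with `|J| ≤ n`. If a probability distribution `D` on `{0,1}^J`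
satisfies `|Σ_z D(z)·(−1)^(Σ_{i∈I} z_i)| ≤ n^(−5|I|)` for every nonempty `I ⊆ J`, then
`|D(z) − 2^(−|J|)| ≤ (1/n³)·2^(−|J|)` for every `z`, i.e. `D` is `1/n³`-pointwise-close
to uniform. -/
theorem pointwise_uniformity_from_parities (n : ℕ) (hn : 2 ≤ n)
    (J : Type) [Fintype J] [DecidableEq J] [Nonempty J]
    (hJ : Fintype.card J ≤ n)
    (D : (J → Bool) → ℝ)
    (hD0 : ∀ z, 0 ≤ D z) (hD1 : ∑ z, D z = 1)
    (hFourier : ∀ I : Finset J, I.Nonempty →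
      |∑ z, D z * (-1 : ℝ) ^ (∑ i ∈ I, if z i then 1 else 0)| ≤
        (n : ℝ) ^ (-(5 * (I.card : ℝ)))) :
    ∀ z : J → Bool,
      |D z - (2 : ℝ) ^ (-(Fintype.card J : ℝ))| ≤
        (1 / (n : ℝ) ^ 3) * (2 : ℝ) ^ (-(Fintype.card J : ℝ)) :=
  pointwise_uniformity_from_parities_general n hn J hJ D hD1 hFourier
end

section
/- Exponentially small parity bias for essentially-structured rectangles: There exists N such that for every n ≥ N the following holds with m = n^256. Let ρ ∈ {0,1,*}^n and let X × Y ⊆ [m]^n × ({0,1}^m)^n be a ρ-essentially-structured rectangle with nm − log₂|Y| ≤ n³ + 1. Then for every nonempty I ⊆ free(ρ), when (x,y) is uniformly distributed on X × Y, |E[(−1)^(Σ_{i∈I} Ind_m(x_i, y_i))]| ≤ n^(−5|I|). -/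
/-!
Write the sum as `∑ x ∈ X, g (x|_I)` with `g β = ∑ y ∈ Y, ∏ i ∈ I, (-1) ^ y i (β i)`. Density of
`X` bounds every fibre of `x ↦ x|_I` by `2|X| m^(-0.9|I|)`, so by Cauchy–Schwarz the squared bias
is at most `2 m^(-0.9|I|) / |Y|² · ∑_β g β²`, and `∑_β g β² = ∑_{y, y' ∈ Y} ∏_{i ∈ I} ⟨y i, y' i⟩`
where `⟨u, v⟩ = ∑_a (-1)^(u a + v a)`. By Chernoff, `|⟨u, v⟩| > s = n^130` holds only for a
`2 exp(-s²/2m) = 2 exp(-n⁴/2)` fraction of all pairs, which the deficiency `n³ + 1` of `Y` cannot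
compensate, while every product is at most `s^|I|` on the remaining pairs and `m^|I|` anyway.
Hence `∑_β g β² ≤ |Y|² (s^|I| + |I|)`, and `m^0.9 = n^230.4` leaves room for `n^(-10|I|)`.
-/

open Finset Real

noncomputable def boolSign (b : Bool) : ℝ := if b then -1 else 1

@[simp] lemma abs_boolSign (b : Bool) : |boolSign b| = 1 := by cases b <;> simp [boolSign]

lemma boolSign_mul_boolSign_xor (b c : Bool) : boolSign b * boolSign (xor b c) = boolSign c := by
  cases b <;> cases c <;> norm_num [boolSign]

lemma neg_one_pow_ite_eq_boolSign (b : Bool) : (-1 : ℝ) ^ (if b then 1 else 0) = boolSign b := by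
  cases b <;> simp [boolSign]

section Chernoff

variable {m : ℕ}

noncomputable def signSum (u : Fin m → Bool) : ℝ := ∑ a, boolSign (u a)

lemma sum_exp_mul_signSum (l : ℝ) :
    ∑ u : Fin m → Bool, exp (l * signSum u) = (2 * cosh l) ^ m := by
  have hbit : ∑ b : Bool, exp (l * boolSign b) = 2 * cosh l := by
    simp [boolSign, cosh_eq]
    ring
  simp_rw [signSum, mul_sum, exp_sum]
  rw [← Fintype.prod_sum (fun (_ : Fin m) b => exp (l * boolSign b)), hbit, prod_const, card_univ,
    Fintype.card_fin]

lemma exp_mul_abs_le (l x : ℝ) : exp (l * |x|) ≤ exp (l * x) + exp (-l * x) := by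
  have := exp_pos (l * x)
  have := exp_pos (-l * x)
  rcases abs_choice x with h | h <;> rw [h]
  · linarith
  · rw [mul_neg, ← neg_mul]
    linarith

lemma card_lt_abs_signSum_le (hm : 0 < m) {s : ℝ} (hs : 0 ≤ s) :
    (#{u : Fin m → Bool | s < |signSum u|} : ℝ) ≤ 2 * 2 ^ m * exp (-(s ^ 2 / (2 * m))) := by
  set l := s / m
  have hindicator (u : Fin m → Bool) : (if s < |signSum u| then (1 : ℝ) else 0) ≤
      (exp (l * signSum u) + exp (-l * signSum u)) * exp (-(l * s)) := by
    split_ifs with h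
    · calc (1 : ℝ) ≤ exp (l * |signSum u|) * exp (-(l * s)) := by
            rw [← exp_add, one_le_exp_iff]
            nlinarith [show 0 ≤ l by positivity]
        _ ≤ _ := by gcongr; exact exp_mul_abs_le l _
    · positivity
  calc (#{u : Fin m → Bool | s < |signSum u|} : ℝ)
      ≤ ∑ u, (exp (l * signSum u) + exp (-l * signSum u)) * exp (-(l * s)) := by
        rw [natCast_card_filter]
        exact sum_le_sum fun u _ => hindicator u
    _ = 2 * (2 * cosh l) ^ m * exp (-(l * s)) := by
        rw [← sum_mul, sum_add_distrib, sum_exp_mul_signSum, sum_exp_mul_signSum, cosh_neg]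
        ring
    _ ≤ 2 * (2 * exp (l ^ 2 / 2)) ^ m * exp (-(l * s)) := by
        gcongr
        exact cosh_le_exp_half_sq l
    _ = 2 * 2 ^ m * exp (-(s ^ 2 / (2 * m))) := by
        have hexponent : m * (l ^ 2 / 2) + -(l * s) = -(s ^ 2 / (2 * m)) := by
          simp only [l]
          field_simp
          ring
        rw [mul_pow, ← exp_nat_mul, ← hexponent, exp_add]
        ring

end Chernoff

lemma sum_comp_eval {ι β M : Type*} [Fintype ι] [DecidableEq ι] [Fintype β] [DecidableEq β]
    [AddCommMonoid M] (i : ι) (q : β → M) :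
    ∑ w : ι → β, q (w i) = Fintype.card β ^ (Fintype.card ι - 1) • ∑ b, q b := by
  rw [← sum_fiberwise univ (fun w : ι → β => w i), smul_sum]
  refine sum_congr rfl fun b _ => ?_
  rw [sum_congr rfl fun w hw => congrArg q (mem_filter.1 hw).2, sum_const,
    ← Fintype.piFinset_univ, Fintype.card_filter_piFinset_const_eq_of_mem _ _ (mem_univ b),
    card_univ]

section Correlation

variable {m : ℕ}

noncomputable def correlation (u v : Fin m → Bool) : ℝ := ∑ a, boolSign (u a) * boolSign (v a)

lemma abs_correlation_le (u v : Fin m → Bool) : |correlation u v| ≤ m :=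
  (abs_sum_le_sum_abs _ _).trans (by simp [abs_mul])

lemma correlation_xor (u w : Fin m → Bool) :
    correlation u (fun a => xor (u a) (w a)) = signSum w :=
  sum_congr rfl fun _ _ => boolSign_mul_boolSign_xor _ _

lemma card_lt_abs_correlation_le (hm : 0 < m) {s : ℝ} (hs : 0 ≤ s) :
    (#{p : (Fin m → Bool) × (Fin m → Bool) | s < |correlation p.1 p.2|} : ℝ) ≤
      2 ^ m * (2 * 2 ^ m * exp (-(s ^ 2 / (2 * m)))) := by
  have hxor (u : Fin m → Bool) : Function.Involutive fun w a => xor (u a) (w a) :=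
    fun w => funext fun a => by simp
  calc (#{p : (Fin m → Bool) × (Fin m → Bool) | s < |correlation p.1 p.2|} : ℝ)
      = ∑ u : Fin m → Bool, (#{w : Fin m → Bool | s < |signSum w|} : ℝ) := by
        rw [natCast_card_filter, Fintype.sum_prod_type]
        refine sum_congr rfl fun u _ => ?_
        rw [natCast_card_filter, ← Equiv.sum_comp (hxor u).toPerm]
        simp only [Function.Involutive.coe_toPerm, correlation_xor]
    _ ≤ 2 ^ m * (2 * 2 ^ m * exp (-(s ^ 2 / (2 * m)))) := by
        rw [sum_const, card_univ, Fintype.card_fun, Fintype.card_bool, Fintype.card_fin,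
          nsmul_eq_mul]
        push_cast
        gcongr
        exact card_lt_abs_signSum_le hm hs

lemma card_lt_abs_correlation_apply_le {ι : Type*} [Fintype ι] [DecidableEq ι] (hm : 0 < m)
    {s : ℝ} (hs : 0 ≤ s) (i : ι) :
    (#{p : (ι → Fin m → Bool) × (ι → Fin m → Bool) | s < |correlation (p.1 i) (p.2 i)|} : ℝ) ≤
      2 * exp (-(s ^ 2 / (2 * m))) * ((2 ^ m) ^ Fintype.card ι) ^ 2 := by
  have hcube : Fintype.card (Fin m → Bool) = 2 ^ m := by simp
  have hι : (2 : ℝ) ^ m * (2 ^ m) ^ (Fintype.card ι - 1) = (2 ^ m) ^ Fintype.card ι := by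
    rw [← pow_succ', Nat.sub_add_cancel (Fintype.card_pos_iff.2 ⟨i⟩)]
  calc (#{p : (ι → Fin m → Bool) × (ι → Fin m → Bool) | s < |correlation (p.1 i) (p.2 i)|} : ℝ)
      = ((2 ^ m) ^ (Fintype.card ι - 1)) ^ 2 *
          #{p : (Fin m → Bool) × (Fin m → Bool) | s < |correlation p.1 p.2|} := by
        set F : (Fin m → Bool) → (Fin m → Bool) → ℝ :=
          fun u v => if s < |correlation u v| then 1 else 0
        rw [natCast_card_filter, natCast_card_filter, Fintype.sum_prod_type,
          Fintype.sum_prod_type]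
        change ∑ y : ι → Fin m → Bool, ∑ y' : ι → Fin m → Bool, F (y i) (y' i) = _
        rw [sum_congr rfl fun y _ => sum_comp_eval i (F (y i)), ← smul_sum,
          sum_comp_eval i (fun u => ∑ v, F u v), smul_smul, hcube, nsmul_eq_mul]
        push_cast
        ring
    _ ≤ ((2 ^ m) ^ (Fintype.card ι - 1)) ^ 2 *
          (2 ^ m * (2 * 2 ^ m * exp (-(s ^ 2 / (2 * m))))) := by
        gcongr
        exact card_lt_abs_correlation_le hm hs
    _ = 2 * exp (-(s ^ 2 / (2 * m))) * ((2 ^ m) ^ Fintype.card ι) ^ 2 := by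
        rw [← hι]
        ring

end Correlation

lemma prod_le_pow_add_pow_mul_card_filter {ι : Type*} (I : Finset ι) (f : ι → ℝ) {s M : ℝ}
    (hs : 0 ≤ s) (hM : ∀ i ∈ I, |f i| ≤ M) :
    ∏ i ∈ I, f i ≤ s ^ #I + M ^ #I * #{i ∈ I | s < |f i|} := by
  have hprod : ∏ i ∈ I, f i ≤ ∏ i ∈ I, |f i| := (le_abs_self _).trans (abs_prod _ _).le
  by_cases hsmall : ∀ i ∈ I, |f i| ≤ s
  · have hgood : {i ∈ I | s < |f i|} = ∅ :=
      filter_eq_empty_iff.2 fun i hi => not_lt.2 (hsmall i hi)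
    rw [hgood, card_empty, Nat.cast_zero, mul_zero, add_zero, ← prod_const]
    exact hprod.trans (prod_le_prod (fun i _ => abs_nonneg _) hsmall)
  · push Not at hsmall
    obtain ⟨i₀, hi₀, hbad⟩ := hsmall
    have hcount : (1 : ℝ) ≤ #{i ∈ I | s < |f i|} := by
      exact_mod_cast card_pos.2 ⟨i₀, mem_filter.2 ⟨hi₀, hbad⟩⟩
    have hM0 : 0 ≤ M := (abs_nonneg _).trans (hM i₀ hi₀)
    calc ∏ i ∈ I, f i ≤ M ^ #I := by
          rw [← prod_const]
          exact hprod.trans (prod_le_prod (fun i _ => abs_nonneg _) hM)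
      _ ≤ M ^ #I * #{i ∈ I | s < |f i|} := le_mul_of_one_le_right (by positivity) hcount
      _ ≤ s ^ #I + M ^ #I * #{i ∈ I | s < |f i|} := le_add_of_nonneg_left (by positivity)

lemma sum_comp_le_mul_sum {α β : Type*} [Fintype β] [DecidableEq β] (X : Finset α) (φ : α → β)
    {F : β → ℝ} (hF : ∀ b, 0 ≤ F b) {C : ℝ} (hC0 : 0 ≤ C)
    (hC : ∀ x ∈ X, (#{x' ∈ X | φ x' = φ x} : ℝ) ≤ C) :
    ∑ x ∈ X, F (φ x) ≤ C * ∑ b, F b := by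
  rw [sum_comp, mul_sum]
  calc ∑ b ∈ X.image φ, #{x ∈ X | φ x = b} • F b ≤ ∑ b ∈ X.image φ, C * F b := by
        refine sum_le_sum fun b hb => ?_
        obtain ⟨x, hx, rfl⟩ := mem_image.1 hb
        rw [nsmul_eq_mul]
        exact mul_le_mul_of_nonneg_right (hC x hx) (hF _)
    _ ≤ ∑ b, C * F b :=
        sum_le_sum_of_subset_of_nonneg (subset_univ _) fun b _ _ => mul_nonneg hC0 (hF b)

section Bias

variable {ι : Type*} {m : ℕ}

lemma sum_neg_one_pow_eq_sum_prod_boolSign (I : Finset ι) (X : Finset (ι → Fin m))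
    (Y : Finset (ι → Fin m → Bool)) :
    ∑ p ∈ X ×ˢ Y, (-1 : ℝ) ^ (∑ i ∈ I, if p.2 i (p.1 i) then 1 else 0) =
      ∑ x ∈ X, ∑ y ∈ Y, ∏ i : I, boolSign (y i (x i)) := by
  rw [sum_product]
  refine sum_congr rfl fun x _ => sum_congr rfl fun y _ => ?_
  rw [← prod_pow_eq_pow_sum, ← prod_coe_sort I]
  simp only [neg_one_pow_ite_eq_boolSign]

lemma sum_sq_eq_sum_prod_correlation [DecidableEq ι] (I : Finset ι)
    (Y : Finset (ι → Fin m → Bool)) :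
    ∑ β : I → Fin m, (∑ y ∈ Y, ∏ i : I, boolSign (y i (β i))) ^ 2 =
      ∑ p ∈ Y ×ˢ Y, ∏ i ∈ I, correlation (p.1 i) (p.2 i) := by
  rw [sum_product]
  simp_rw [sq, sum_mul_sum, ← prod_mul_distrib]
  rw [sum_comm]
  refine sum_congr rfl fun y _ => ?_
  rw [sum_comm]
  refine sum_congr rfl fun y' _ => ?_
  rw [← prod_coe_sort I]
  exact (Fintype.prod_sum fun (i : I) a => boolSign (y i a) * boolSign (y' i a)).symm

lemma sum_prod_correlation_le [Fintype ι] [DecidableEq ι] (hm : 0 < m) {s : ℝ} (hs : 0 ≤ s)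
    (I : Finset ι) (Y : Finset (ι → Fin m → Bool)) :
    ∑ p ∈ Y ×ˢ Y, ∏ i ∈ I, correlation (p.1 i) (p.2 i) ≤
      #Y ^ 2 * s ^ #I + m ^ #I * #I *
        (2 * exp (-(s ^ 2 / (2 * m))) * ((2 ^ m) ^ Fintype.card ι) ^ 2) := by
  set bad : ι → (ι → Fin m → Bool) × (ι → Fin m → Bool) → Prop :=
    fun i p => s < |correlation (p.1 i) (p.2 i)|
  calc ∑ p ∈ Y ×ˢ Y, ∏ i ∈ I, correlation (p.1 i) (p.2 i)
      ≤ ∑ p ∈ Y ×ˢ Y, (s ^ #I + (m : ℝ) ^ #I * #{i ∈ I | bad i p}) :=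
        sum_le_sum fun p _ =>
          prod_le_pow_add_pow_mul_card_filter I _ hs fun i _ => abs_correlation_le _ _
    _ = #Y ^ 2 * s ^ #I + m ^ #I * ∑ i ∈ I, (#{p ∈ Y ×ˢ Y | bad i p} : ℝ) := by
        simp only [sum_add_distrib, sum_const, card_product, nsmul_eq_mul, ← mul_sum,
          natCast_card_filter]
        rw [sum_comm]
        push_cast
        ring
    _ ≤ #Y ^ 2 * s ^ #I + m ^ #I * ∑ i ∈ I,
          2 * exp (-(s ^ 2 / (2 * m))) * ((2 ^ m) ^ Fintype.card ι) ^ 2 := by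
        gcongr with i
        exact (Nat.cast_le.2 (card_le_card (filter_subset_filter _ (subset_univ _)))).trans
          (card_lt_abs_correlation_apply_le hm hs i)
    _ = _ := by
        rw [sum_const, nsmul_eq_mul]
        ring

theorem sq_sum_neg_one_pow_le [Fintype ι] [DecidableEq ι] (hm : 0 < m) {s C : ℝ} (hs : 0 ≤ s)
    (hC : 0 ≤ C) (I : Finset ι) (X : Finset (ι → Fin m)) (Y : Finset (ι → Fin m → Bool))
    (hX : ∀ x ∈ X, (#{x' ∈ X | ∀ i ∈ I, x' i = x i} : ℝ) ≤ C) :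
    (∑ p ∈ X ×ˢ Y, (-1 : ℝ) ^ (∑ i ∈ I, if p.2 i (p.1 i) then 1 else 0)) ^ 2 ≤
      #X * C * (#Y ^ 2 * s ^ #I + m ^ #I * #I *
        (2 * exp (-(s ^ 2 / (2 * m))) * ((2 ^ m) ^ Fintype.card ι) ^ 2)) := by
  set g : (I → Fin m) → ℝ := fun β => ∑ y ∈ Y, ∏ i : I, boolSign (y i (β i))
  have hfiber (x : ι → Fin m) (hx : x ∈ X) :
      (#{x' ∈ X | I.restrict x' = I.restrict x} : ℝ) ≤ C := by
    convert hX x hx using 4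
    simp [funext_iff]
  calc (∑ p ∈ X ×ˢ Y, (-1 : ℝ) ^ (∑ i ∈ I, if p.2 i (p.1 i) then 1 else 0)) ^ 2
      = (∑ x ∈ X, g (I.restrict x)) ^ 2 := by rw [sum_neg_one_pow_eq_sum_prod_boolSign]; rfl
    _ ≤ #X * ∑ x ∈ X, g (I.restrict x) ^ 2 := sq_sum_le_card_mul_sum_sq
    _ ≤ #X * (C * ∑ β, g β ^ 2) := by
        gcongr
        exact sum_comp_le_mul_sum X I.restrict (fun _ => sq_nonneg _) hC hfiber
    _ = #X * C * ∑ p ∈ Y ×ˢ Y, ∏ i ∈ I, correlation (p.1 i) (p.2 i) := by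
        rw [sum_sq_eq_sum_prod_correlation, mul_assoc]
    _ ≤ _ := by
        gcongr
        exact sum_prod_correlation_le hm hs I Y

end Bias

lemma two_rpow_le_rpow_mul_of_sub_logb_le {a d y : ℝ} (hy : 0 < y) (h : a - logb 2 y ≤ d) :
    (2 : ℝ) ^ a ≤ 2 ^ d * y := by
  calc (2 : ℝ) ^ a = 2 ^ (a - logb 2 y) * 2 ^ logb 2 y := by
        rw [← rpow_add two_pos, sub_add_cancel]
    _ ≤ 2 ^ d * y := by
        rw [rpow_logb two_pos (by norm_num) hy]
        gcongr
        norm_num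

lemma pow_mul_exp_mul_pow_le_one {n k : ℕ} (hn : 32 ≤ n) (hk : k ≤ n) :
    ((n ^ 256 : ℕ) : ℝ) ^ k * (2 * exp (-((n : ℝ) ^ 4 / 2))) * ((2 : ℝ) ^ (n ^ 3 + 1)) ^ 2 ≤ 1 := by
  have hn0 : (0 : ℝ) < n := by positivity
  have hnR : (32 : ℝ) ≤ n := by exact_mod_cast hn
  have hkR : (k : ℝ) ≤ n := by exact_mod_cast hk
  have hlog2 : log 2 ≤ 1 := by linarith [log_le_sub_one_of_pos (two_pos : (0 : ℝ) < 2)]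
  have hlogn : log n ≤ n := (log_le_sub_one_of_pos hn0).trans (by linarith)
  have hpow : ((n ^ 256 : ℕ) : ℝ) ^ k = exp (k * (256 * log n)) := by
    rw [show (k : ℝ) * (256 * log n) = log (((n ^ 256 : ℕ) : ℝ) ^ k) by
      rw [log_pow, Nat.cast_pow, log_pow]; push_cast; ring, exp_log (by positivity)]
  have htwo : 2 * ((2 : ℝ) ^ (n ^ 3 + 1)) ^ 2 = exp ((2 * (n ^ 3 + 1) + 1) * log 2) := by
    rw [show (2 * ((n : ℝ) ^ 3 + 1) + 1) * log 2 = log (2 * ((2 : ℝ) ^ (n ^ 3 + 1)) ^ 2) by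
      rw [log_mul two_ne_zero (by positivity), log_pow, log_pow]; push_cast; ring,
      exp_log (by positivity)]
  calc ((n ^ 256 : ℕ) : ℝ) ^ k * (2 * exp (-((n : ℝ) ^ 4 / 2))) * ((2 : ℝ) ^ (n ^ 3 + 1)) ^ 2
      = exp (k * (256 * log n) + (2 * (n ^ 3 + 1) + 1) * log 2 - n ^ 4 / 2) := by
        rw [exp_sub, exp_add, ← hpow, ← htwo, exp_neg]
        ring
    _ ≤ 1 := by
        rw [exp_le_one_iff]
        have hklog : k * (256 * log n) ≤ n * (256 * n) := by gcongr
        have h2log : (2 * ((n : ℝ) ^ 3 + 1) + 1) * log 2 ≤ 2 * (n ^ 3 + 1) + 1 :=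
          mul_le_of_le_one_right (by positivity) hlog2
        have hn4 : 32 * (n : ℝ) ^ 3 ≤ n ^ 4 := by
          nlinarith [mul_le_mul_of_nonneg_left hnR (pow_nonneg hn0.le 3)]
        have hn3 : 32 * (n : ℝ) ^ 2 ≤ n ^ 3 := by
          nlinarith [mul_le_mul_of_nonneg_left hnR (pow_nonneg hn0.le 2)]
        nlinarith

lemma tail_le_of_deficiency {n k : ℕ} (hn : 32 ≤ n) (hk : k ≤ n) {y : ℝ} (hy : 0 < y)
    (hdef : (n : ℝ) * ((n ^ 256 : ℕ) : ℝ) - logb 2 y ≤ (n : ℝ) ^ 3 + 1) :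
    ((n ^ 256 : ℕ) : ℝ) ^ k * k * (2 * exp (-(((n : ℝ) ^ 130) ^ 2 / (2 * (n ^ 256 : ℕ)))) *
      (((2 : ℝ) ^ n ^ 256) ^ n) ^ 2) ≤ k * y ^ 2 := by
  have hcube : ((2 : ℝ) ^ n ^ 256) ^ n ≤ 2 ^ (n ^ 3 + 1) * y := by
    have := two_rpow_le_rpow_mul_of_sub_logb_le hy hdef
    rwa [mul_comm, rpow_mul two_pos.le, ← Nat.cast_pow, ← Nat.cast_add_one, rpow_natCast,
      rpow_natCast, rpow_natCast] at this
  have hexponent : ((n : ℝ) ^ 130) ^ 2 / (2 * (n ^ 256 : ℕ)) = n ^ 4 / 2 := by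
    push_cast
    field_simp
  rw [hexponent]
  calc ((n ^ 256 : ℕ) : ℝ) ^ k * k * (2 * exp (-((n : ℝ) ^ 4 / 2)) * (((2 : ℝ) ^ n ^ 256) ^ n) ^ 2)
      ≤ ((n ^ 256 : ℕ) : ℝ) ^ k * k *
          (2 * exp (-((n : ℝ) ^ 4 / 2)) * (2 ^ (n ^ 3 + 1) * y) ^ 2) := by
        gcongr
    _ = k * y ^ 2 * (((n ^ 256 : ℕ) : ℝ) ^ k * (2 * exp (-((n : ℝ) ^ 4 / 2))) *
          ((2 : ℝ) ^ (n ^ 3 + 1)) ^ 2) := by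
        ring
    _ ≤ k * y ^ 2 := mul_le_of_le_one_right (by positivity) (pow_mul_exp_mul_pow_le_one hn hk)

lemma two_mul_rpow_mul_pow_add_le {n k : ℕ} (hn : 4 ≤ n) (hk : 1 ≤ k) :
    2 * ((n ^ 256 : ℕ) : ℝ) ^ (-(0.9 * (k : ℝ))) * (((n : ℝ) ^ 130) ^ k + k) ≤
      (n : ℝ) ^ (-(10 * (k : ℝ))) := by
  have hn4 : (4 : ℝ) ≤ n := by exact_mod_cast hn
  have hn0 : (0 : ℝ) < n := by linarith
  have hk1 : (1 : ℝ) ≤ k := by exact_mod_cast hk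
  have hm : ((n ^ 256 : ℕ) : ℝ) ^ (-(0.9 * (k : ℝ))) = (n : ℝ) ^ (-(230.4 * (k : ℝ))) := by
    rw [Nat.cast_pow, ← rpow_natCast, ← rpow_mul hn0.le]
    congr 1
    ring
  have hs : ((n : ℝ) ^ 130) ^ k = (n : ℝ) ^ (130 * (k : ℝ)) := by
    rw [← pow_mul, ← rpow_natCast, Nat.cast_mul, Nat.cast_ofNat]
  have hk_le : (k : ℝ) ≤ ((n : ℝ) ^ 130) ^ k := by
    exact_mod_cast (Nat.lt_pow_self (Nat.one_lt_pow (by norm_num) (by omega))).le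
  have hsplit : (n : ℝ) ^ (-(230.4 * (k : ℝ))) * (n : ℝ) ^ (130 * (k : ℝ)) =
      (n : ℝ) ^ (-(90.4 * (k : ℝ))) * (n : ℝ) ^ (-(10 * (k : ℝ))) := by
    rw [← rpow_add hn0, ← rpow_add hn0]
    ring_nf
  have hsmall : 4 * (n : ℝ) ^ (-(90.4 * (k : ℝ))) ≤ 1 := by
    calc 4 * (n : ℝ) ^ (-(90.4 * (k : ℝ))) ≤ 4 * (n : ℝ) ^ (-1 : ℝ) := by
          gcongr
          · linarith
          · linarith
      _ ≤ 1 := by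
          rw [rpow_neg_one, ← div_eq_mul_inv, div_le_one hn0]
          exact hn4
  calc 2 * ((n ^ 256 : ℕ) : ℝ) ^ (-(0.9 * (k : ℝ))) * (((n : ℝ) ^ 130) ^ k + k)
      ≤ 2 * (n : ℝ) ^ (-(230.4 * (k : ℝ))) * (2 * (n : ℝ) ^ (130 * (k : ℝ))) := by
        rw [hm, ← hs]
        gcongr
        linarith
    _ = 4 * (n : ℝ) ^ (-(90.4 * (k : ℝ))) * (n : ℝ) ^ (-(10 * (k : ℝ))) := by
        linear_combination 4 * hsplit
    _ ≤ (n : ℝ) ^ (-(10 * (k : ℝ))) := mul_le_of_le_one_left (by positivity) hsmall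

/-- **Exponentially small parity bias for essentially-structured rectangles.** For
`ρ ∈ {0,1,*}^n` (encoded as `ρ : Fin n → Option Bool`) and a `ρ`-essentially-structured
rectangle `X × Y` with `nm − log₂|Y| ≤ n³ + 1`: for every nonempty `I ⊆ free(ρ)`, when
`(x,y)` is uniform on `X × Y`, `|E[(−1)^(Σ_{i∈I} Ind_m(x_i,y_i))]| ≤ n^(−5|I|)`. -/
theorem parity_bias_structured :
    ∃ N : ℕ, ∀ n : ℕ, N ≤ n →
    ∀ (ρ : Fin n → Option Bool)
      (X : Finset (Fin n → Fin (n ^ 256))) (Y : Finset (Fin n → Fin (n ^ 256) → Bool)),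
      X.Nonempty → Y.Nonempty →
      -- all elements of X agree on the fixed positions of ρ
      (∀ x ∈ X, ∀ x' ∈ X, ∀ i : Fin n, ρ i ≠ none → x i = x' i) →
      -- the projection of X to free(ρ) is 0.9-essentially-dense
      (∀ I : Finset (Fin n), (∀ i ∈ I, ρ i = none) → I.Nonempty →
        ∀ α : Fin n → Fin (n ^ 256),
        ((X.filter fun x => ∀ i ∈ I, x i = α i).card : ℝ) ≤
          2 * (X.card : ℝ) * ((n ^ 256 : ℕ) : ℝ) ^ (-(0.9 * (I.card : ℝ)))) →
      -- every output G(x,y) on X × Y is consistent with ρ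
      (∀ x ∈ X, ∀ y ∈ Y, ∀ i : Fin n, ∀ b : Bool, ρ i = some b → y i (x i) = b) →
      -- deficiency of Y at most n³ + 1
      ((n : ℝ) * ((n ^ 256 : ℕ) : ℝ) - Real.logb 2 (Y.card : ℝ) ≤ (n : ℝ) ^ 3 + 1) →
      ∀ I : Finset (Fin n), I.Nonempty → (∀ i ∈ I, ρ i = none) →
        |(∑ p ∈ X ×ˢ Y, (-1 : ℝ) ^ (∑ i ∈ I, if p.2 i (p.1 i) then 1 else 0)) /
            ((X.card : ℝ) * (Y.card : ℝ))| ≤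
          (n : ℝ) ^ (-(5 * (I.card : ℝ))) := by
  refine ⟨32, fun n hn ρ X Y hX hY _ hdense _ hdef I hI hfree => ?_⟩
  have hXY : (0 : ℝ) < #X * #Y := by have := hX.card_pos; have := hY.card_pos; positivity
  have hk : #I ≤ n := (card_le_univ I).trans_eq (Fintype.card_fin n)
  have htail := tail_le_of_deficiency hn hk (by exact_mod_cast hY.card_pos) hdef
  have hbias := sq_sum_neg_one_pow_le (by positivity) (by positivity : (0 : ℝ) ≤ n ^ 130)
    (C := 2 * #X * ((n ^ 256 : ℕ) : ℝ) ^ (-(0.9 * (#I : ℝ)))) (by positivity) I X Y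
    -- `convert` only reconciles the decidability instances of the two filters
    fun x _ => by convert hdense I hfree hI x
  rw [Fintype.card_fin] at hbias
  rw [abs_div, abs_of_pos hXY, div_le_iff₀ hXY]
  refine abs_le_of_sq_le_sq ?_ (by positivity)
  calc _ ≤ _ := hbias
    _ ≤ #X * (2 * #X * ((n ^ 256 : ℕ) : ℝ) ^ (-(0.9 * (#I : ℝ)))) *
          (#Y ^ 2 * ((n : ℝ) ^ 130) ^ #I + #I * #Y ^ 2) := by gcongr
    _ = (#X * #Y) ^ 2 *
          (2 * ((n ^ 256 : ℕ) : ℝ) ^ (-(0.9 * (#I : ℝ))) * (((n : ℝ) ^ 130) ^ #I + #I)) := by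
        ring
    _ ≤ (#X * #Y) ^ 2 * (n : ℝ) ^ (-(10 * (#I : ℝ))) := by
        gcongr
        exact two_mul_rpow_mul_pow_add_le (by omega) hI.card_pos
    _ = ((n : ℝ) ^ (-(5 * (#I : ℝ))) * (#X * #Y)) ^ 2 := by
        rw [mul_pow _ (_ * _) 2, ← rpow_natCast ((n : ℝ) ^ _) 2, ← rpow_mul (by positivity)]
        ring_nf
end

section
/- Deficiency-reducing bucket partition (Claim for Bob's side): There exists N such that for every n ≥ N the following holds with m = n^256 (so √m = n^128 is an integer). Let I ⊆ [n] be nonempty and let Y ⊆ ({0,1}^m)^I be nonempty with |I|·m − log₂|Y| ≤ n³ + 1, and set ε = (1/2) · n^(−5|I|). Then there is a partition Y = Y⁰ ∪ Y¹ ∪ ⋯ ∪ Y^k (with Y⁰ possibly empty and Y¹,…,Y^k nonempty) such that |Y⁰| ≤ (ε/3)·|Y| and every part Y^c with c ≥ 1 satisfies: (P1) for each coordinate i ∈ I, at most 2n³ of the √m buckets of coordinate i are fixed in Y^c; and (P2) for every ℓ ∈ [√m]^I such that no bucket T_{ℓ_i} (i ∈ I) is fixed in Y^c, and for every γ ∈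 {0,1}^{T_ℓ}, |{y ∈ Y^c : y_{T_ℓ} = γ}| ≤ 2 · 2^(−|I|√m) · |Y^c|. -/
open Finset

/-- The bucket index of `j ∈ [m]` where `m = n^256` is partitioned into `√m = n^128`
consecutive buckets of size `√m = n^128` each. -/
def bucket (n : ℕ) (j : Fin (n ^ 256)) : Fin (n ^ 128) :=
  ⟨j.val / n ^ 128, by
    have hj := j.isLt
    have hn : 0 < n := by
      rcases Nat.eq_zero_or_pos n with rfl | h
      · exact absurd hj (by norm_num)
      · exact h
    have h256 : n ^ 256 = n ^ 128 * n ^ 128 := by ring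
    exact Nat.div_lt_of_lt_mul (h256 ▸ hj)⟩

/-- The bucket `T_{ℓᵢ}` of coordinate `i` is *fixed* in `Yc ⊆ ({0,1}^m)^I`: all strings
in `Yc` agree on the bits in positions `{i} × T_{ℓᵢ}`. -/
def BucketFixed (n : ℕ) (I : Finset (Fin n))
    (Yc : Finset ({i // i ∈ I} → Fin (n ^ 256) → Bool))
    (i : {i // i ∈ I}) (ℓi : Fin (n ^ 128)) : Prop :=
  ∀ y ∈ Yc, ∀ y' ∈ Yc, ∀ j : Fin (n ^ 256), bucket n j = ℓi → y i j = y' i j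

/-!
Greedy decomposition. Among the subcubes of the remaining set `Z` that fix the same number `t`
of buckets in every coordinate, peel off one maximising `|Z ∩ subcube| · 2^(t(|I|√m − 1))`.
Fixing one more free bucket in every coordinate cannot increase this weight, which is (P2) for
the part, and the empty subcube shows the weight is at least `|Z|`. If the part has more than
`2n³` fixed buckets in some coordinate (and at least `t` in every one), then
`|part| ≤ 2^(|I|m − √m · #fixed buckets)` forces `|Z| ≤ 2^(|I|m − 2n³ − 1)`; we stop there and put all of `Z` into `Y⁰`, which by the deficiency
bound on `Y` is at most `2^(−n³)|Y| ≤ (ε/3)|Y|`.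
-/

theorem card_mul_pow_le_of_forall_eq {α β : Type*} [Fintype α] [Fintype β] (C : Finset (α → β))
    (F : Finset α) (hC : ∀ y ∈ C, ∀ y' ∈ C, ∀ a ∈ F, y a = y' a) :
    C.card * Fintype.card β ^ F.card ≤ Fintype.card β ^ Fintype.card α := by
  classical
  have hinj : Set.InjOn (fun (y : α → β) (a : ↥Fᶜ) => y a) (C : Set (α → β)) := by
    intro y hy y' hy' h
    funext a
    by_cases ha : a ∈ F
    · exact hC y hy y' hy' a ha
    · exact congrFun h ⟨a, mem_compl.2 ha⟩
  have hcard : C.card ≤ Fintype.card β ^ (Fintype.card α - F.card) := by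
    simpa [Fintype.card_fun, card_compl] using
      card_le_card_of_injOn _ (fun _ _ => mem_univ _) hinj
  calc C.card * Fintype.card β ^ F.card
      ≤ Fintype.card β ^ (Fintype.card α - F.card) * Fintype.card β ^ F.card :=
        Nat.mul_le_mul_right _ hcard
    _ = Fintype.card β ^ Fintype.card α := by rw [← pow_add, Nat.sub_add_cancel (card_le_univ F)]

theorem mul_sub_one_add_le_mul_sum {ι : Type*} [Fintype ι] (f : ι → ℕ) {r t d : ℕ}
    (hr : 1 ≤ r) (ht : ∀ i, t ≤ f i) {i₀ : ι} (hd : d ≤ f i₀) :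
    t * (Fintype.card ι * r - 1) + d ≤ r * ∑ i, f i := by
  classical
  have hsum : (Fintype.card ι - 1) * t + max t d ≤ ∑ i, f i := by
    rw [← add_sum_erase _ _ (mem_univ i₀)]
    have := card_nsmul_le_sum (univ.erase i₀) (fun i => f i) t fun i _ => ht i
    rw [card_erase_of_mem (mem_univ _), card_univ, smul_eq_mul] at this
    have := max_le (ht i₀) hd
    omega
  obtain ⟨κ, hκ⟩ : ∃ κ, Fintype.card ι = κ + 1 :=
    Nat.exists_eq_add_one.2 (Fintype.card_pos_iff.2 ⟨i₀⟩)
  obtain ⟨r, rfl⟩ : ∃ r', r = r' + 1 := Nat.exists_eq_add_one.2 hr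
  refine le_trans ?_ (Nat.mul_le_mul_left _ hsum)
  rw [hκ, show (κ + 1) * (r + 1) - 1 = κ * r + κ + r by ring_nf; omega, Nat.add_sub_cancel]
  rcases le_total t d with h | h
  · rw [max_eq_right h]; nlinarith
  · rw [max_eq_left h]; nlinarith

theorem Finset.exists_finpartition_sdiff {α : Type*} [DecidableEq α]
    (good small : Finset α → Prop) (h_small : small ∅)
    (step : ∀ Z : Finset α, Z.Nonempty → (∃ C ⊆ Z, C.Nonempty ∧ good C) ∨ small Z)
    (Z : Finset α) : ∃ R ⊆ Z, small R ∧ ∃ P : Finpartition (Z \ R), ∀ C ∈ P.parts, good C := by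
  induction Z using Finset.strongInduction with
  | H Z ih =>
  have of_small (h : small Z) :
      ∃ R ⊆ Z, small R ∧ ∃ P : Finpartition (Z \ R), ∀ C ∈ P.parts, good C := by
    refine ⟨Z, subset_rfl, h, ?_⟩
    rw [sdiff_self]
    exact ⟨Finpartition.empty _, by simp⟩
  rcases Z.eq_empty_or_nonempty with rfl | hZ
  · exact of_small h_small
  rcases step Z hZ with ⟨C, hCZ, hC, hgood⟩ | h
  · obtain ⟨R, hR, hsmall, P, hP⟩ := ih (Z \ C) (sdiff_ssubset hCZ hC)
    have hdisj : Disjoint ((Z \ C) \ R) C := disjoint_sdiff_self_left.mono_left sdiff_subset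
    have hunion : (Z \ C) \ R ⊔ C = Z \ R := by
      ext x
      simp only [sup_eq_union, mem_union, mem_sdiff]
      constructor
      · rintro (⟨⟨hx, -⟩, hxR⟩ | hxC)
        · exact ⟨hx, hxR⟩
        · exact ⟨hCZ hxC, fun hxR => (mem_sdiff.1 (hR hxR)).2 hxC⟩
      · rintro ⟨hx, hxR⟩
        by_cases hxC : x ∈ C
        exacts [.inr hxC, .inl ⟨⟨hx, hxC⟩, hxR⟩]
    refine ⟨R, hR.trans sdiff_subset, hsmall, P.extend hC.ne_empty hdisj hunion, ?_⟩
    simp only [Finpartition.extend_parts, mem_insert]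
    rintro C' (rfl | hC')
    exacts [hgood, hP C' hC']
  · exact of_small h

theorem Finpartition.exists_fin_enum {α : Type*} [DecidableEq α] {s : Finset α}
    (P : Finpartition s) :
    ∃ (k : ℕ) (f : Fin k → Finset α), (∀ c, f c ∈ P.parts) ∧
      (∀ c c', c ≠ c' → Disjoint (f c) (f c')) ∧ univ.biUnion f = s := by
  let e := P.parts.equivFin.symm
  refine ⟨_, fun c => e c, fun c => (e c).2, fun c c' h => P.disjoint (e c).2 (e c').2
    fun h' => h (e.injective (Subtype.ext h')), ?_⟩
  refine .trans ?_ P.biUnion_parts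
  ext x
  simp only [mem_biUnion, mem_univ, true_and, id]
  constructor
  · rintro ⟨c, hc⟩
    exact ⟨_, (e c).2, hc⟩
  · rintro ⟨v, hv, hx⟩
    exact ⟨e.symm ⟨v, hv⟩, by simpa using hx⟩

namespace BucketPartition

section

variable {ι J B : Type*} (b : J → B)

-- `BucketFixed n I` is `IsFixed (bucket n)` over the coordinate type `{i // i ∈ I}`.
def IsFixed (C : Finset (ι → J → Bool)) (i : ι) (ℓ : B) : Prop :=
  ∀ y ∈ C, ∀ y' ∈ C, ∀ j, b j = ℓ → y i j = y' i j

open Classical in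
noncomputable def cylinder (Z : Finset (ι → J → Bool)) (S : ι → Finset B)
    (β : ι → J → Bool) : Finset (ι → J → Bool) :=
  Z.filter fun y => ∀ i j, b j ∈ S i → y i j = β i j

open Classical in
noncomputable def fixedBuckets [Fintype B] (C : Finset (ι → J → Bool)) (i : ι) : Finset B :=
  univ.filter (IsFixed b C i)

open Classical in
noncomputable def fixedPositions [Fintype ι] [Fintype J] (C : Finset (ι → J → Bool)) :
    Finset (ι × J) :=
  univ.filter fun p => IsFixed b C p.1 (b p.2)

def IsClean (s : ℕ) (C : Finset (ι → J → Bool)) : Prop :=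
  ∀ ℓ : ι → B, (∀ i, ¬ IsFixed b C i (ℓ i)) →
    ∀ γ, (cylinder b C (fun i => {ℓ i}) γ).card * 2 ^ s ≤ C.card

variable {b}

theorem mem_cylinder {Z : Finset (ι → J → Bool)} {S : ι → Finset B} {β y : ι → J → Bool} :
    y ∈ cylinder b Z S β ↔ y ∈ Z ∧ ∀ i j, b j ∈ S i → y i j = β i j := by
  simp [cylinder]

theorem cylinder_subset {Z : Finset (ι → J → Bool)} {S : ι → Finset B} {β : ι → J → Bool} :
    cylinder b Z S β ⊆ Z :=
  fun _ hy => (mem_cylinder.1 hy).1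

@[simp]
theorem cylinder_empty (Z : Finset (ι → J → Bool)) (β : ι → J → Bool) :
    cylinder b Z (fun _ => ∅) β = Z := by
  ext y
  simp [mem_cylinder]

theorem cylinder_singleton [Fintype ι] [Fintype J] [DecidableEq B] (C : Finset (ι → J → Bool))
    (ℓ : ι → B) (γ : ι → J → Bool) :
    cylinder b C (fun i => {ℓ i}) γ = C.filter fun y => ∀ i j, b j = ℓ i → y i j = γ i j := by
  ext y
  simp only [mem_cylinder, mem_filter, mem_singleton]

theorem cylinder_cylinder [DecidableEq B] {Z : Finset (ι → J → Bool)} {S T : ι → Finset B}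
    {β γ : ι → J → Bool} (hST : ∀ i, Disjoint (S i) (T i)) :
    cylinder b (cylinder b Z S β) T γ =
      cylinder b Z (fun i => S i ∪ T i) fun i j => if b j ∈ T i then γ i j else β i j := by
  ext y
  simp only [mem_cylinder, mem_union]
  constructor
  · rintro ⟨⟨hZ, hS⟩, hT⟩
    refine ⟨hZ, fun i j hj => ?_⟩
    split_ifs with hjT
    · exact hT i j hjT
    · exact hS i j (hj.resolve_right hjT)
  · rintro ⟨hZ, hST'⟩
    refine ⟨⟨hZ, fun i j hjS => ?_⟩, fun i j hjT => ?_⟩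
    · simpa [disjoint_left.1 (hST i) hjS] using hST' i j (.inl hjS)
    · simpa [hjT] using hST' i j (.inr hjT)

theorem isFixed_cylinder {Z : Finset (ι → J → Bool)} {S : ι → Finset B} {β : ι → J → Bool}
    {i : ι} {ℓ : B} (hℓ : ℓ ∈ S i) : IsFixed b (cylinder b Z S β) i ℓ := by
  intro y hy y' hy' j hj
  rw [(mem_cylinder.1 hy).2 i j (hj ▸ hℓ), (mem_cylinder.1 hy').2 i j (hj ▸ hℓ)]

theorem mem_fixedBuckets [Fintype B] {C : Finset (ι → J → Bool)} {i : ι} {ℓ : B} :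
    ℓ ∈ fixedBuckets b C i ↔ IsFixed b C i ℓ := by
  simp [fixedBuckets]

variable (b) in
theorem exists_isClean_cylinder [Fintype ι] [Nonempty ι] [Fintype J] [Fintype B] (s : ℕ)
    {Z : Finset (ι → J → Bool)} (hZ : Z.Nonempty) :
    ∃ (t : ℕ) (S : ι → Finset B) (β : ι → J → Bool), (∀ i, (S i).card = t) ∧
      (cylinder b Z S β).Nonempty ∧ IsClean b s (cylinder b Z S β) ∧
      Z.card ≤ (cylinder b Z S β).card * 2 ^ (t * s) := by
  classical
  let weight : ℕ × (ι → Finset B) × (ι → J → Bool) → ℕ := fun q =>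
    (cylinder b Z q.2.1 q.2.2).card * 2 ^ (q.1 * s)
  let candidates := (range (Fintype.card B + 1) ×ˢ univ).filter
    fun q : ℕ × (ι → Finset B) × (ι → J → Bool) => ∀ i, (q.2.1 i).card = q.1
  have hempty : (0, fun _ => ∅, fun _ _ => false) ∈ candidates := by simp [candidates]
  obtain ⟨⟨t, S, β⟩, hq, hmax⟩ := candidates.exists_max_image weight ⟨_, hempty⟩
  have hS : ∀ i, (S i).card = t := (mem_filter.1 hq).2
  have hZ_le : Z.card ≤ weight (t, S, β) := by simpa [weight] using hmax _ hempty
  refine ⟨t, S, β, hS, card_pos.1 (Nat.pos_of_ne_zero fun h0 => ?_), ?_, hZ_le⟩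
  · simp only [weight, h0, zero_mul, nonpos_iff_eq_zero, card_eq_zero] at hZ_le
    exact hZ.ne_empty hZ_le
  intro ℓ hℓ γ
  have hdisj : ∀ i, Disjoint (S i) {ℓ i} := fun i =>
    disjoint_singleton_right.2 fun h => hℓ i (isFixed_cylinder h)
  have hcard : ∀ i, (S i ∪ {ℓ i}).card = t + 1 := fun i => by
    rw [card_union_of_disjoint (hdisj i), hS, card_singleton]
  have hnext : (t + 1, fun i => S i ∪ {ℓ i},
      fun i j => if b j ∈ ({ℓ i} : Finset B) then γ i j else β i j) ∈ candidates := by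
    have := card_le_univ (S (Classical.arbitrary ι) ∪ {ℓ (Classical.arbitrary ι)})
    rw [hcard] at this
    simp only [candidates, mem_filter, mem_product, mem_range, mem_univ, and_true]
    exact ⟨by omega, hcard⟩
  have hle := hmax _ hnext
  simp only [weight, ← cylinder_cylinder hdisj] at hle
  rw [show (t + 1) * s = s + t * s by ring, pow_add, ← mul_assoc] at hle
  exact Nat.le_of_mul_le_mul_right hle (by positivity)

end

variable {ι J B : Type*} [Fintype ι] [Fintype J] [Fintype B] [DecidableEq B] {b : J → B} {r : ℕ}

theorem card_fixedPositions (hb : ∀ ℓ, (univ.filter fun j => b j = ℓ).card = r)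
    (C : Finset (ι → J → Bool)) :
    (fixedPositions b C).card = r * ∑ i, (fixedBuckets b C i).card := by
  classical
  rw [fixedPositions, card_filter, Fintype.sum_prod_type, mul_sum]
  refine sum_congr rfl fun i _ => ?_
  rw [fixedBuckets, card_filter, mul_sum, ← sum_fiberwise univ b]
  refine sum_congr rfl fun ℓ _ => ?_
  dsimp only
  rw [sum_congr rfl fun j hj => by rw [(mem_filter.1 hj).2]]
  split_ifs <;> simp [hb]

theorem card_mul_two_pow_le (hb : ∀ ℓ, (univ.filter fun j => b j = ℓ).card = r)
    (C : Finset (ι → J → Bool)) :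
    C.card * 2 ^ (r * ∑ i, (fixedBuckets b C i).card) ≤
      2 ^ (Fintype.card ι * Fintype.card J) := by
  classical
  rw [← card_fixedPositions hb]
  have := card_mul_pow_le_of_forall_eq (C.image Function.uncurry) (fixedPositions b C) ?_
  · rwa [card_image_of_injective _ (Function.uncurry_injective (α := ι) (β := J) (γ := Bool)),
      Fintype.card_bool, Fintype.card_prod] at this
  simp only [mem_image]
  rintro _ ⟨y, hy, rfl⟩ _ ⟨y', hy', rfl⟩ p hp
  exact (mem_filter.1 hp).2 y hy y' hy' p.2 rfl

theorem card_mul_two_pow_add_le (hr : 1 ≤ r)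
    (hb : ∀ ℓ, (univ.filter fun j => b j = ℓ).card = r) {C : Finset (ι → J → Bool)} {t d : ℕ}
    (ht : ∀ i, t ≤ (fixedBuckets b C i).card) {i₀ : ι} (hd : d ≤ (fixedBuckets b C i₀).card) :
    C.card * 2 ^ (t * (Fintype.card ι * r - 1) + d) ≤ 2 ^ (Fintype.card ι * Fintype.card J) :=
  (Nat.mul_le_mul_left _ (Nat.pow_le_pow_right two_pos
    (mul_sub_one_add_le_mul_sum _ hr ht hd))).trans (card_mul_two_pow_le hb C)

theorem exists_isClean_or_card_mul_two_pow_le [Nonempty ι] (hr : 1 ≤ r)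
    (hb : ∀ ℓ, (univ.filter fun j => b j = ℓ).card = r) (D : ℕ) {Z : Finset (ι → J → Bool)}
    (hZ : Z.Nonempty) :
    (∃ C ⊆ Z, C.Nonempty ∧ IsClean b (Fintype.card ι * r - 1) C ∧
        ∀ i, (fixedBuckets b C i).card ≤ D) ∨
      Z.card * 2 ^ (D + 1) ≤ 2 ^ (Fintype.card ι * Fintype.card J) := by
  obtain ⟨t, S, β, hS, hne, hclean, hZ_le⟩ := exists_isClean_cylinder b (Fintype.card ι * r - 1) hZ
  by_cases hD : ∀ i, (fixedBuckets b (cylinder b Z S β) i).card ≤ D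
  · exact .inl ⟨_, cylinder_subset, hne, hclean, hD⟩
  simp only [not_forall, not_le] at hD
  obtain ⟨i₀, hi₀⟩ := hD
  have ht : ∀ i, t ≤ (fixedBuckets b (cylinder b Z S β) i).card := fun i =>
    hS i ▸ card_le_card fun ℓ hℓ => mem_fixedBuckets.2 (isFixed_cylinder hℓ)
  right
  calc Z.card * 2 ^ (D + 1)
      ≤ (cylinder b Z S β).card * 2 ^ (t * (Fintype.card ι * r - 1)) * 2 ^ (D + 1) :=
        Nat.mul_le_mul_right _ hZ_le
    _ = (cylinder b Z S β).card * 2 ^ (t * (Fintype.card ι * r - 1) + (D + 1)) := by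
        rw [mul_assoc, ← pow_add]
    _ ≤ 2 ^ (Fintype.card ι * Fintype.card J) := card_mul_two_pow_add_le hr hb ht hi₀

end BucketPartition

theorem card_filter_bucket_eq (n : ℕ) (ℓ : Fin (n ^ 128)) :
    (univ.filter fun j => bucket n j = ℓ).card = n ^ 128 := by
  have hr : 0 < n ^ 128 := ℓ.pos
  have hℓ : ℓ * n ^ 128 + n ^ 128 ≤ n ^ 256 := by
    calc ℓ * n ^ 128 + n ^ 128 = (ℓ + 1) * n ^ 128 := by ring
      _ ≤ n ^ 128 * n ^ 128 := Nat.mul_le_mul_right _ ℓ.isLt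
      _ = n ^ 256 := by ring
  suffices h : (univ.filter fun j => bucket n j = ℓ).map Fin.valEmbedding =
      Ico (ℓ * n ^ 128) (ℓ * n ^ 128 + n ^ 128) by
    rw [← card_map, h, Nat.card_Ico, Nat.add_sub_cancel_left]
  ext x
  simp only [mem_map, mem_filter, mem_univ, true_and, Fin.valEmbedding_apply, mem_Ico, bucket,
    Fin.ext_iff, Nat.div_eq_iff hr]
  constructor
  · rintro ⟨j, hj, rfl⟩
    omega
  · intro hx
    exact ⟨⟨x, by omega⟩, by dsimp only; omega, rfl⟩

theorem two_rpow_le_mul_of_sub_logb_le {a c x : ℝ} (hx : 0 < x) (h : a - Real.logb 2 x ≤ c) :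
    (2 : ℝ) ^ a ≤ x * 2 ^ c :=
  calc (2 : ℝ) ^ a ≤ 2 ^ (Real.logb 2 x + c) :=
        Real.rpow_le_rpow_of_exponent_le (by norm_num) (by linarith)
    _ = x * 2 ^ c := by rw [Real.rpow_add two_pos, Real.rpow_logb two_pos (by norm_num) hx]

theorem six_mul_pow_le_two_pow {n κ : ℕ} (hn : 16 ≤ n) (hκ : κ ≤ n) :
    6 * n ^ (5 * κ) ≤ 2 ^ n ^ 3 :=
  calc 6 * n ^ (5 * κ) ≤ 2 ^ 3 * (2 ^ n) ^ (5 * n) :=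
        Nat.mul_le_mul (by norm_num) ((Nat.pow_le_pow_right (by omega) (by omega)).trans
          (Nat.pow_le_pow_left Nat.lt_two_pow_self.le _))
    _ = 2 ^ (3 + n * (5 * n)) := by rw [← pow_mul, ← pow_add]
    _ ≤ 2 ^ n ^ 3 := Nat.pow_le_pow_right two_pos (by nlinarith [Nat.mul_le_mul_right (n * n) hn])

theorem le_two_mul_two_rpow_neg_mul {a c N : ℕ} (hN : 1 ≤ N) (h : a * 2 ^ (N - 1) ≤ c) :
    (a : ℝ) ≤ 2 * (2 : ℝ) ^ (-(N : ℝ)) * c := by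
  have h' : (a : ℝ) * 2 ^ (N - 1) ≤ c := by exact_mod_cast h
  rw [Real.rpow_neg two_pos.le, Real.rpow_natCast, ← Nat.sub_add_cancel hN, pow_succ', mul_inv,
    ← mul_assoc, mul_inv_cancel₀ two_ne_zero, one_mul, inv_mul_eq_div, le_div_iff₀ (by positivity)]
  exact h'

theorem le_eps_div_three_mul {n κ M R Y : ℕ} (hn : 16 ≤ n) (hκ : κ ≤ n)
    (hR : R * 2 ^ (2 * n ^ 3 + 1) ≤ 2 ^ M) (hY : (2 : ℝ) ^ (M : ℝ) ≤ Y * 2 ^ ((n : ℝ) ^ 3 + 1)) :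
    (R : ℝ) ≤ 1 / 2 * (n : ℝ) ^ (-(5 * (κ : ℝ))) / 3 * Y := by
  have hY' : (2 : ℝ) ^ M ≤ Y * 2 ^ (n ^ 3 + 1) := by
    rw [← Real.rpow_natCast, ← Real.rpow_natCast 2 (n ^ 3 + 1)]
    exact_mod_cast hY
  have hR' : (R : ℝ) * 2 ^ (n ^ 3) * 2 ^ (n ^ 3 + 1) ≤ Y * 2 ^ (n ^ 3 + 1) := by
    rw [mul_assoc, ← pow_add, show n ^ 3 + (n ^ 3 + 1) = 2 * n ^ 3 + 1 by ring]
    exact le_trans (by exact_mod_cast hR) hY'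
  have hRY : (R : ℝ) * 2 ^ (n ^ 3) ≤ Y := le_of_mul_le_mul_right hR' (by positivity)
  have h6 : (6 : ℝ) * n ^ (5 * κ) ≤ 2 ^ (n ^ 3) := by exact_mod_cast six_mul_pow_le_two_pow hn hκ
  rw [show -(5 * (κ : ℝ)) = -((5 * κ : ℕ) : ℝ) by push_cast; ring, Real.rpow_neg (by positivity),
    Real.rpow_natCast, show 1 / 2 * ((n : ℝ) ^ (5 * κ))⁻¹ / 3 * Y = Y / (6 * n ^ (5 * κ)) by
      field_simp; ring, le_div_iff₀ (by positivity)]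
  exact (mul_le_mul_of_nonneg_left h6 R.cast_nonneg).trans hRY

open Classical in
/-- **Deficiency-reducing bucket partition (Claim for Bob's side).** There is `N` such
that for all `n ≥ N` (with `m = n^256`, `√m = n^128`): if `I ⊆ [n]` is nonempty and
`Y ⊆ ({0,1}^m)^I` is nonempty with `|I|·m − log₂|Y| ≤ n³ + 1`, then with
`ε = (1/2)·n^(−5|I|)` there is a partition `Y = Y⁰ ∪ Y¹ ∪ ⋯ ∪ Y^k` with
`|Y⁰| ≤ (ε/3)·|Y|` such that every part `Y^c`, `c ≥ 1`, satisfies: (P1) each coordinate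
has at most `2n³` fixed buckets; (P2) every bucket union containing no fixed bucket has
deficiency at most 1 in `Y^c`. -/
theorem bucket_partition_bob :
    ∃ N : ℕ, ∀ n : ℕ, N ≤ n →
    ∀ I : Finset (Fin n), I.Nonempty →
    ∀ Y : Finset ({i // i ∈ I} → Fin (n ^ 256) → Bool), Y.Nonempty →
      -- deficiency of Y at most n³ + 1
      ((I.card : ℝ) * ((n ^ 256 : ℕ) : ℝ) - Real.logb 2 (Y.card : ℝ) ≤ (n : ℝ) ^ 3 + 1) →
      ∃ (Y0 : Finset ({i // i ∈ I} → Fin (n ^ 256) → Bool)) (k : ℕ)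
        (P : Fin k → Finset ({i // i ∈ I} → Fin (n ^ 256) → Bool)),
        -- Y = Y⁰ ∪ Y¹ ∪ ⋯ ∪ Y^k is a partition, with Y¹, …, Y^k nonempty
        (∀ c, (P c).Nonempty) ∧
        (∀ c c', c ≠ c' → Disjoint (P c) (P c')) ∧
        (∀ c, Disjoint Y0 (P c)) ∧
        (Y = Y0 ∪ Finset.univ.biUnion P) ∧
        -- |Y⁰| ≤ (ε/3)·|Y| where ε = (1/2)·n^(−5|I|)
        ((Y0.card : ℝ) ≤ (1 / 2) * (n : ℝ) ^ (-(5 * (I.card : ℝ))) / 3 * (Y.card : ℝ)) ∧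
        ∀ c : Fin k,
          -- (P1) each coordinate i has at most 2n³ fixed buckets in Y^c
          (∀ i : {i // i ∈ I},
            (((Finset.univ : Finset (Fin (n ^ 128))).filter
                fun ℓi => BucketFixed n I (P c) i ℓi).card : ℝ) ≤ 2 * (n : ℝ) ^ 3) ∧
          -- (P2) bucket unions without fixed buckets have deficiency at most 1 in Y^c
          (∀ ℓ : {i // i ∈ I} → Fin (n ^ 128),
            (∀ i, ¬ BucketFixed n I (P c) i (ℓ i)) →
            ∀ γ : {i // i ∈ I} → Fin (n ^ 256) → Bool,
              (((P c).filter fun y => ∀ i, ∀ j : Fin (n ^ 256),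
                  bucket n j = ℓ i → y i j = γ i j).card : ℝ) ≤
                2 * (2 : ℝ) ^ (-((I.card : ℝ) * ((n ^ 128 : ℕ) : ℝ))) *
                  ((P c).card : ℝ)) := by
  refine ⟨16, fun n hn I hI Y hY hdef => ?_⟩
  have : Nonempty {i // i ∈ I} := hI.coe_sort
  have hκ : Fintype.card {i // i ∈ I} = I.card := Fintype.card_coe I
  obtain ⟨R, hRY, hR, P, hP⟩ := Finset.exists_finpartition_sdiff
    (fun C => BucketPartition.IsClean (bucket n) (I.card * n ^ 128 - 1) C ∧
      ∀ i, (BucketPartition.fixedBuckets (bucket n) C i).card ≤ 2 * n ^ 3)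
    (fun R => R.card * 2 ^ (2 * n ^ 3 + 1) ≤ 2 ^ (I.card * n ^ 256)) (by simp)
    (fun Z hZ => by
      simpa only [hκ, Fintype.card_fin] using
        BucketPartition.exists_isClean_or_card_mul_two_pow_le (Nat.one_le_pow _ _ (by omega))
          (card_filter_bucket_eq n) (2 * n ^ 3) hZ) Y
  obtain ⟨k, f, hf, hdisj, hcover⟩ := P.exists_fin_enum
  refine ⟨R, k, f, fun c => P.nonempty_of_mem_parts (hf c), hdisj,
    fun c => disjoint_sdiff_self_right.mono_right (P.le (hf c)),
    by rw [hcover, union_sdiff_of_subset hRY], ?_, fun c => ⟨fun i => ?_, fun ℓ hℓ γ => ?_⟩⟩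
  · exact le_eps_div_three_mul hn ((card_le_univ I).trans_eq (Fintype.card_fin n)) hR
      (two_rpow_le_mul_of_sub_logb_le (by exact_mod_cast hY.card_pos) (by rwa [Nat.cast_mul]))
  · exact_mod_cast (hP _ (hf c)).2 i
  · have hN : 1 ≤ I.card * n ^ 128 := Nat.mul_pos hI.card_pos (by positivity)
    have hclean := (hP _ (hf c)).1 ℓ hℓ γ
    rw [BucketPartition.cylinder_singleton] at hclean
    rw [← Nat.cast_mul]
    convert le_two_mul_two_rpow_neg_mul hN hclean using 4
end

section
/- Bucket-hitting probability bound: There exists N such that for every n ≥ N the following holds with m = n^256 (so √m = n^128 is an integer). Let I ⊆ [n] be nonempty, and let ℓ be a random variable over [√m]^I that is 0.8-essentially-dense, i.e., for every nonempty H ⊆ I and every β ∈ [√m]^H, Pr[ℓ_H = β] ≤ 2 · (√m)^(−0.8|H|). Let B_i ⊆ [√m] be sets with |B_i| ≤ 2n³ for each i ∈ I. Then Pr[ |{i ∈ I : ℓ_i ∈ B_i}| ≥ |I|/2 ] ≤ (1/12) · n^(−5|I|). -/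
/-!
Union bound. If at least `⌈|I|/2⌉ = h` coordinates of `ℓ` hit their buckets, then `ℓ` lies in
`∏_{i ∈ H} B_i` on some `H` of size `h`. There are at most `2^|I|` such `H`, each box has at most
`(2n³)^h` points `β`, and density bounds the probability that `ℓ_H = β` by `2 n^(-102.4 h)`.
Since `h ≥ |I|/2`, the product is at most `2 · n^(-5|I| - 1) ≤ n^(-5|I|) / 12` for `n ≥ 24`.
-/

open Finset Real

theorem Finset.sum_le_sum_sum_of_subset_biUnion {ι β M : Type*} [DecidableEq β]
    [AddCommMonoid M] [PartialOrder M] [IsOrderedAddMonoid M] {f : β → M} (hf : ∀ x, 0 ≤ f x)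
    {s : Finset ι} {t : ι → Finset β} {u : Finset β} (hu : u ⊆ s.biUnion t) :
    ∑ x ∈ u, f x ≤ ∑ a ∈ s, ∑ x ∈ t a, f x := by
  classical
  refine (sum_le_sum_of_subset_of_nonneg hu fun x _ _ => hf x).trans ?_
  clear hu
  induction s using Finset.induction_on with
  | empty => simp
  | insert a s ha ih =>
    rw [biUnion_insert, sum_insert ha]
    calc _ ≤ ∑ x ∈ t a ∪ s.biUnion t, f x + ∑ x ∈ t a ∩ s.biUnion t, f x :=
          le_add_of_nonneg_right (sum_nonneg fun x _ => hf x)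
      _ = ∑ x ∈ t a, f x + ∑ x ∈ s.biUnion t, f x := sum_union_inter
      _ ≤ _ := by gcongr

section Cylinders

variable {ι α : Type*} [Fintype ι] [DecidableEq ι] [Fintype α] [DecidableEq α]
  {p : (ι → α) → ℝ} {ε : ℝ} {H : Finset ι}

theorem sum_le_of_eqOn_of_cylinder_le (hp : ∀ ℓ, 0 ≤ p ℓ) (hε : 0 ≤ ε)
    (hcyl : ∀ β : ι → α, ∑ ℓ ∈ univ.filter (fun ℓ => ∀ i ∈ H, ℓ i = β i), p ℓ ≤ ε)
    {s : Finset (ι → α)} (hs : ∀ ℓ ∈ s, ∀ ℓ' ∈ s, ∀ i ∈ H, ℓ i = ℓ' i) :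
    ∑ ℓ ∈ s, p ℓ ≤ ε := by
  rcases s.eq_empty_or_nonempty with rfl | ⟨ℓ₀, hℓ₀⟩
  · simpa using hε
  calc ∑ ℓ ∈ s, p ℓ ≤ ∑ ℓ ∈ univ.filter (fun ℓ => ∀ i ∈ H, ℓ i = ℓ₀ i), p ℓ :=
        sum_le_sum_of_subset_of_nonneg
          (fun ℓ hℓ => mem_filter.2 ⟨mem_univ _, hs ℓ hℓ ℓ₀ hℓ₀⟩) fun ℓ _ _ => hp ℓ
    _ ≤ ε := hcyl ℓ₀

/-- Fibre the event over the restriction `ℓ|_H ∈ ∏_{i ∈ H} B i`: each fibre is inside a cylinder. -/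
theorem sum_forall_mem_le_prod_card_mul (hp : ∀ ℓ, 0 ≤ p ℓ) (hε : 0 ≤ ε)
    (hcyl : ∀ β : ι → α, ∑ ℓ ∈ univ.filter (fun ℓ => ∀ i ∈ H, ℓ i = β i), p ℓ ≤ ε)
    (B : ι → Finset α) :
    ∑ ℓ ∈ univ.filter (fun ℓ => ∀ i ∈ H, ℓ i ∈ B i), p ℓ ≤ (∏ i ∈ H, #(B i) : ℕ) * ε := by
  classical
  let restrict : (ι → α) → (H → α) := fun ℓ i => ℓ i
  have hmaps : ∀ ℓ ∈ univ.filter (fun ℓ => ∀ i ∈ H, ℓ i ∈ B i),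
      restrict ℓ ∈ Fintype.piFinset fun i : H => B i := fun ℓ hℓ =>
    Fintype.mem_piFinset.2 fun i => (mem_filter.1 hℓ).2 i i.2
  rw [← sum_fiberwise_of_maps_to hmaps]
  calc _ ≤ ∑ _γ ∈ Fintype.piFinset (fun i : H => B i), ε := by
        refine sum_le_sum fun γ _ => sum_le_of_eqOn_of_cylinder_le hp hε hcyl ?_
        intro ℓ hℓ ℓ' hℓ' i hi
        have := (mem_filter.1 hℓ).2.trans (mem_filter.1 hℓ').2.symm
        exact congrFun this ⟨i, hi⟩
    _ = _ := by
        rw [sum_const, nsmul_eq_mul, Fintype.card_piFinset, prod_coe_sort H fun i => #(B i)]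

theorem sum_le_choose_mul_pow_mul_of_cylinder_le (hp : ∀ ℓ, 0 ≤ p ℓ) (hε : 0 ≤ ε) {h : ℕ}
    (hcyl : ∀ H : Finset ι, #H = h → ∀ β : ι → α,
      ∑ ℓ ∈ univ.filter (fun ℓ => ∀ i ∈ H, ℓ i = β i), p ℓ ≤ ε)
    {b : ℕ} (B : ι → Finset α) (hB : ∀ i, #(B i) ≤ b) :
    ∑ ℓ ∈ univ.filter (fun ℓ => h ≤ #(univ.filter fun i => ℓ i ∈ B i)), p ℓ ≤
      (Fintype.card ι).choose h * b ^ h * ε := by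
  classical
  have hcover : univ.filter (fun ℓ : ι → α => h ≤ #(univ.filter fun i => ℓ i ∈ B i)) ⊆
      (powersetCard h univ).biUnion fun H => univ.filter fun ℓ => ∀ i ∈ H, ℓ i ∈ B i := by
    intro ℓ hℓ
    obtain ⟨H, hHhit, hHcard⟩ := exists_subset_card_eq (mem_filter.1 hℓ).2
    refine mem_biUnion.2 ⟨H, mem_powersetCard.2 ⟨subset_univ H, hHcard⟩, ?_⟩
    exact mem_filter.2 ⟨mem_univ _, fun i hi => (mem_filter.1 (hHhit hi)).2⟩
  calc _ ≤ ∑ H ∈ powersetCard h univ, ∑ ℓ ∈ univ.filter (fun ℓ => ∀ i ∈ H, ℓ i ∈ B i), p ℓ :=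
        sum_le_sum_sum_of_subset_biUnion hp hcover
    _ ≤ ∑ _H ∈ powersetCard h (univ : Finset ι), (b ^ h : ℕ) * ε := by
        refine sum_le_sum fun H hH => ?_
        have hprod : ∏ i ∈ H, #(B i) ≤ b ^ h :=
          (mem_powersetCard.1 hH).2 ▸ prod_le_pow_card H _ b fun i _ => hB i
        exact (sum_forall_mem_le_prod_card_mul hp hε (hcyl H (mem_powersetCard.1 hH).2) B).trans
          (by gcongr)
    _ = _ := by
        rw [sum_const, card_powersetCard, card_univ, nsmul_eq_mul]
        push_cast
        ring

end Cylinders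

theorem two_pow_mul_pow_mul_rpow_le {x : ℝ} (hx : 24 ≤ x) {k h : ℕ} (hkh : k ≤ 2 * h)
    (hh : 1 ≤ h) :
    (2 : ℝ) ^ k * (2 * x ^ 3) ^ h * (2 * (x ^ 128) ^ (-(0.8 * (h : ℝ)))) ≤
      1 / 12 * x ^ (-(5 * (k : ℝ))) := by
  have hx0 : 0 < x := by linarith
  have hpoly : (2 : ℝ) ^ k * (2 * x ^ 3) ^ h ≤ x ^ ((k : ℝ) + 4 * h) := by
    rw [rpow_add hx0, rpow_natCast, show (4 * h : ℝ) = ((4 * h : ℕ) : ℝ) by push_cast; ring,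
      rpow_natCast, pow_mul]
    gcongr
    · linarith
    · nlinarith [pow_pos hx0 3]
  have hdense : (x ^ 128) ^ (-(0.8 * (h : ℝ))) = x ^ (-(102.4 * (h : ℝ))) := by
    rw [← rpow_natCast, ← rpow_mul hx0.le]
    congr 1
    push_cast
    ring
  have hexp : (k : ℝ) + 4 * h + -(102.4 * h) ≤ -1 + -(5 * (k : ℝ)) := by
    have : (k : ℝ) ≤ 2 * h := by exact_mod_cast hkh
    have : (1 : ℝ) ≤ h := by exact_mod_cast hh
    linarith
  calc _ ≤ x ^ ((k : ℝ) + 4 * h) * (2 * x ^ (-(102.4 * (h : ℝ)))) := by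
        rw [hdense]
        gcongr
    _ = 2 * x ^ ((k : ℝ) + 4 * h + -(102.4 * h)) := by
        rw [rpow_add hx0 ((k : ℝ) + 4 * h)]
        ring
    _ ≤ 2 * x ^ (-1 + -(5 * (k : ℝ))) := by
        gcongr
        linarith
    _ = 2 / x * x ^ (-(5 * (k : ℝ))) := by
        rw [rpow_add hx0, rpow_neg_one]
        ring
    _ ≤ 1 / 12 * x ^ (-(5 * (k : ℝ))) := by
        gcongr ?_ * _
        rw [div_le_div_iff₀ hx0 (by norm_num)]
        linarith

open Classical in
/-- **Bucket-hitting probability bound.** There is `N` such that for all `n ≥ N` (with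
`√m = n^128`): if `I ⊆ [n]` is nonempty and `ℓ` is a random variable over `[√m]^I`
(given by a pmf `pℓ`) that is 0.8-essentially-dense, i.e.
`Pr[ℓ_H = β] ≤ 2·(√m)^(−0.8|H|)` for all nonempty `H ⊆ I` and all `β`, and `Bᵢ ⊆ [√m]`
with `|Bᵢ| ≤ 2n³` for each `i ∈ I`, then
`Pr[|{i ∈ I : ℓᵢ ∈ Bᵢ}| ≥ |I|/2] ≤ (1/12)·n^(−5|I|)`. -/
theorem bucket_hitting_bound :
    ∃ N : ℕ, ∀ n : ℕ, N ≤ n →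
    ∀ I : Finset (Fin n), I.Nonempty →
    ∀ pℓ : ({i // i ∈ I} → Fin (n ^ 128)) → ℝ,
      (∀ ℓ, 0 ≤ pℓ ℓ) → (∑ ℓ, pℓ ℓ = 1) →
      -- ℓ is 0.8-essentially-dense
      (∀ H : Finset {i // i ∈ I}, H.Nonempty → ∀ β : {i // i ∈ I} → Fin (n ^ 128),
        ∑ ℓ ∈ Finset.univ.filter
            (fun ℓ : {i // i ∈ I} → Fin (n ^ 128) => ∀ i ∈ H, ℓ i = β i), pℓ ℓ ≤
          2 * ((n ^ 128 : ℕ) : ℝ) ^ (-(0.8 * (H.card : ℝ)))) →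
    ∀ B : {i // i ∈ I} → Finset (Fin (n ^ 128)),
      (∀ i, (B i).card ≤ 2 * n ^ 3) →
      ∑ ℓ ∈ Finset.univ.filter
          (fun ℓ : {i // i ∈ I} → Fin (n ^ 128) =>
            I.card ≤ 2 * (Finset.univ.filter fun i => ℓ i ∈ B i).card), pℓ ℓ ≤
        (1 / 12) * (n : ℝ) ^ (-(5 * (I.card : ℝ))) := by
  refine ⟨24, fun n hn I hI pℓ hp _ hdense B hB => ?_⟩
  set h := (#I + 1) / 2
  have hh : 1 ≤ h := by have := hI.card_pos; omega
  have hcyl : ∀ H : Finset {i // i ∈ I}, #H = h → ∀ β : {i // i ∈ I} → Fin (n ^ 128),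
      ∑ ℓ ∈ univ.filter (fun ℓ => ∀ i ∈ H, ℓ i = β i), pℓ ℓ ≤
        2 * ((n : ℝ) ^ 128) ^ (-(0.8 * (h : ℝ))) := fun H hH β => by
    simpa [hH] using hdense H (card_pos.1 (by omega)) β
  calc _ ≤ ∑ ℓ ∈ univ.filter (fun ℓ => h ≤ #(univ.filter fun i => ℓ i ∈ B i)), pℓ ℓ :=
        sum_le_sum_of_subset_of_nonneg (monotone_filter_right _ fun ℓ _ => by omega)
          fun ℓ _ _ => hp ℓ
    _ ≤ (#I).choose h * ((2 * n ^ 3 : ℕ) : ℝ) ^ h * (2 * ((n : ℝ) ^ 128) ^ (-(0.8 * (h : ℝ)))) := by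
        simpa using sum_le_choose_mul_pow_mul_of_cylinder_le hp (by positivity) hcyl B hB
    _ ≤ 2 ^ #I * (2 * (n : ℝ) ^ 3) ^ h * (2 * ((n : ℝ) ^ 128) ^ (-(0.8 * (h : ℝ)))) := by
        push_cast
        gcongr
        exact_mod_cast Nat.choose_le_two_pow _ _
    _ ≤ _ := two_pow_mul_pow_mul_rpow_le (by exact_mod_cast hn) (by omega) hh
end

section
/- Exponential tail for sums of logarithmic potentials: Let p₁, …, p_k be independent random variables, each uniformly distributed on the open interval (0,1), and define c_j = log₂(1/p_j) + log₂(1/(1−p_j)). Then for each j, E[2^(c_j/2)] = ∫₀¹ (p(1−p))^(−1/2) dp = π, and consequently, for every real a, Pr[ Σ_{j=1}^k c_j ≥ a ] ≤ π^k · 2^(−a/2). -/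
/-!
By Markov's inequality applied to `∏ⱼ 2^(cⱼ/2) = 2^((∑ⱼ cⱼ)/2)`, the tail is at most
`2^(-a/2)` times the integral of this product over the product measure, which factorizes
as `(E[2^(c/2)])^k`. On `(0,1)` we have `2^(c(p)/2) = (p(1-p))^(-1/2)`, whose integral is
`B(1/2, 1/2) = Γ(1/2)² = π`.
-/

open MeasureTheory Set ProbabilityTheory

theorem integral_Ioo_rpow_mul_one_sub_rpow {α β : ℝ} (hα : 0 < α) (hβ : 0 < β) :
    ∫ x in Ioo (0 : ℝ) 1, x ^ (α - 1) * (1 - x) ^ (β - 1) = beta α β := by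
  have h : ((∫ x in Ioo (0 : ℝ) 1, x ^ (α - 1) * (1 - x) ^ (β - 1) : ℝ) : ℂ) =
      Complex.betaIntegral α β := by
    rw [← integral_complex_ofReal, Complex.betaIntegral,
      intervalIntegral.integral_of_le zero_le_one, ← integral_Ioc_eq_integral_Ioo]
    refine setIntegral_congr_fun measurableSet_Ioc fun x ⟨hx0, hx1⟩ => ?_
    push_cast [Complex.ofReal_cpow hx0.le, Complex.ofReal_cpow (sub_nonneg.2 hx1)]
    rfl
  rw [beta_eq_betaIntegralReal α β hα hβ, ← h, Complex.ofReal_re]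

theorem beta_half_half : beta (1 / 2) (1 / 2) = Real.pi := by
  rw [beta, add_halves, Real.Gamma_one, div_one, Real.Gamma_one_half_eq,
    Real.mul_self_sqrt Real.pi_pos.le]

theorem integral_Ioo_rpow_neg_half_mul_one_sub :
    ∫ x in Ioo (0 : ℝ) 1, (x * (1 - x)) ^ (-(1 / 2) : ℝ) = Real.pi := by
  rw [← beta_half_half, ← integral_Ioo_rpow_mul_one_sub_rpow one_half_pos one_half_pos]
  refine setIntegral_congr_fun measurableSet_Ioo fun x ⟨hx0, hx1⟩ => ?_
  rw [Real.mul_rpow hx0.le (sub_nonneg.2 hx1.le)]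
  norm_num

noncomputable def logPotential (x : ℝ) : ℝ := Real.logb 2 (1 / x) + Real.logb 2 (1 / (1 - x))

theorem two_rpow_half_logPotential {x : ℝ} (hx : x ∈ Ioo (0 : ℝ) 1) :
    (2 : ℝ) ^ (logPotential x / 2) = (x * (1 - x)) ^ (-(1 / 2) : ℝ) := by
  obtain ⟨hx0, hx1⟩ := hx
  have hpos : 0 < x * (1 - x) := mul_pos hx0 (sub_pos.2 hx1)
  have : logPotential x / 2 = Real.logb 2 ((x * (1 - x)) ^ (-(1 / 2) : ℝ)) := by
    rw [logPotential, Real.logb_rpow_eq_mul_logb_of_pos hpos, one_div, one_div, Real.logb_inv,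
      Real.logb_inv, Real.logb_mul hx0.ne' (sub_pos.2 hx1).ne']
    ring
  rw [this, Real.rpow_logb two_pos (by norm_num) (Real.rpow_pos_of_pos hpos _)]

theorem integral_two_rpow_half_logPotential :
    ∫ x in Ioo (0 : ℝ) 1, (2 : ℝ) ^ (logPotential x / 2) = Real.pi := by
  rw [← integral_Ioo_rpow_neg_half_mul_one_sub]
  exact setIntegral_congr_fun measurableSet_Ioo fun x hx => two_rpow_half_logPotential hx

theorem measure_pi_sum_ge_le_rpow_moment_pow {Ω ι : Type*} [MeasurableSpace Ω] [Fintype ι]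
    {μ : Measure Ω} [IsFiniteMeasure μ] {c : Ω → ℝ} {b t : ℝ} (hb : 1 < b) (ht : 0 < t)
    (hc : Integrable (fun x => b ^ (t * c x)) μ) (a : ℝ) :
    Measure.pi (fun _ : ι => μ) {p | a ≤ ∑ j, c (p j)} ≤
      ENNReal.ofReal ((∫ x, b ^ (t * c x) ∂μ) ^ Fintype.card ι * b ^ (-(t * a))) := by
  have hprod (p : ι → Ω) : ∏ j, b ^ (t * c (p j)) = b ^ (t * ∑ j, c (p j)) := by
    rw [Finset.mul_sum, Real.rpow_sum_of_pos (by linarith)]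
  have hsub :
      {p : ι → Ω | a ≤ ∑ j, c (p j)} ⊆ {p | b ^ (t * a) ≤ ∏ j, b ^ (t * c (p j))} :=
    fun p (hp : a ≤ _) => by
      rw [mem_ofPred_eq, hprod]
      exact Real.rpow_le_rpow_of_exponent_le hb.le (mul_le_mul_of_nonneg_left hp ht.le)
  have hmarkov := mul_meas_ge_le_integral_of_nonneg (μ := Measure.pi fun _ : ι => μ)
    (Filter.Eventually.of_forall fun p =>
      Finset.prod_nonneg fun j _ => (Real.rpow_pos_of_pos (by linarith) _).le)
    (Integrable.fintype_prod (f := fun _ => fun x => b ^ (t * c x)) fun _ => hc) (b ^ (t * a))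
  rw [integral_fintype_prod_eq_pow (fun x => b ^ (t * c x))] at hmarkov
  have hbta : 0 < b ^ (t * a) := Real.rpow_pos_of_pos (by linarith) _
  calc _ ≤ Measure.pi (fun _ : ι => μ) {p | b ^ (t * a) ≤ ∏ j, b ^ (t * c (p j))} :=
        measure_mono hsub
    _ = ENNReal.ofReal
          ((Measure.pi fun _ : ι => μ).real {p | b ^ (t * a) ≤ ∏ j, b ^ (t * c (p j))}) :=
        (ofReal_measureReal).symm
    _ ≤ _ := by
      refine ENNReal.ofReal_le_ofReal ?_
      rw [Real.rpow_neg (by linarith), ← div_eq_mul_inv]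
      exact (le_div_iff₀' hbta).2 hmarkov

instance : IsProbabilityMeasure (volume.restrict (Ioo (0 : ℝ) 1)) := ⟨by simp⟩

/-- **Exponential tail for sums of logarithmic potentials.** Let `p₁, …, p_k` be
independent uniform random variables on `(0,1)` (modeled by the product of the uniform
probability measures on `(0,1)`), and `c_j = log₂(1/p_j) + log₂(1/(1−p_j))`. Then
`E[2^(c_j/2)] = ∫₀¹ (p(1−p))^(−1/2) dp = π`, and for every real `a`,
`Pr[Σ_j c_j ≥ a] ≤ π^k · 2^(−a/2)`. -/
theorem exponential_tail_log_potentials (k : ℕ) :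
    (∀ j : Fin k,
      ∫ p : Fin k → ℝ,
          (2 : ℝ) ^ ((Real.logb 2 (1 / p j) + Real.logb 2 (1 / (1 - p j))) / 2)
        ∂(Measure.pi fun _ : Fin k => volume.restrict (Set.Ioo (0 : ℝ) 1)) =
      Real.pi) ∧
    (∫ p in Set.Ioo (0 : ℝ) 1, (p * (1 - p)) ^ (-(1 / 2) : ℝ) = Real.pi) ∧
    (∀ a : ℝ,
      (Measure.pi fun _ : Fin k => volume.restrict (Set.Ioo (0 : ℝ) 1))
          {p : Fin k → ℝ |
            a ≤ ∑ j, (Real.logb 2 (1 / p j) + Real.logb 2 (1 / (1 - p j)))} ≤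
        ENNReal.ofReal (Real.pi ^ k * (2 : ℝ) ^ (-a / 2))) := by
  have hint : Integrable (fun x => (2 : ℝ) ^ (logPotential x / 2)) (volume.restrict (Ioo 0 1)) :=
    .of_integral_ne_zero (integral_two_rpow_half_logPotential ▸ Real.pi_ne_zero)
  refine ⟨fun j => ?_, integral_Ioo_rpow_neg_half_mul_one_sub, fun a => ?_⟩
  · exact (integral_comp_eval (μ := fun _ : Fin k => volume.restrict (Ioo (0 : ℝ) 1)) (i := j)
      hint.aestronglyMeasurable).trans integral_two_rpow_half_logPotential
  · have h := measure_pi_sum_ge_le_rpow_moment_pow (ι := Fin k) (c := logPotential)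
      one_lt_two one_half_pos (by simpa only [one_div_mul_eq_div] using hint) a
    simp only [one_div_mul_eq_div, integral_two_rpow_half_logPotential, Fintype.card_fin] at h
    rwa [neg_div]
end
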